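/- arXiv:2004.01365 — 10 statements merged into one kernel-verified Lean document; each statement's English description precedes it below -/
import Mathlib

section
/- For every positive integer k there exists a (3K_1, 4-wheel)-free graph H (in particular, H is (P_5, 4-wheel)-free) such that ω(H) = 7k and χ(H) ≥ 10k; consequently χ(H) ≥ (10/7)·ω(H). -/
open SimpleGraph

/-- `G` contains no induced copy of `H`. -/
def InducedFree {W V : Type*} (H : SimpleGraph W) (G : SimpleGraph V) : Prop :=
  IsEmpty (H ↪g G)

/-- The `k`-wheel: a chordless cycle `C_k` plus an extra vertex adjacent to all of it. -/
def wheel (k : ℕ) : SimpleGraph (Fin k ⊕ Unit) :=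
  SimpleGraph.fromRel (fun x y =>
    (∃ a b, x = Sum.inl a ∧ y = Sum.inl b ∧ (SimpleGraph.cycleGraph k).Adj a b) ∨
    (x.isLeft ∧ y.isRight))

/-- A stable (independent) set: pairwise nonadjacent vertices. -/
def IsStableSet {V : Type*} (G : SimpleGraph V) (S : Set V) : Prop :=
  S.Pairwise (fun a b => ¬ G.Adj a b)

/-- A graph is nice if it has three disjoint stable sets whose removal
drops the clique number by at least 2. -/
def IsNice {V : Type*} (G : SimpleGraph V) : Prop :=
  ∃ S₁ S₂ S₃ : Set V, IsStableSet G S₁ ∧ IsStableSet G S₂ ∧ IsStableSet G S₃ ∧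
    Disjoint S₁ S₂ ∧ Disjoint S₁ S₃ ∧ Disjoint S₂ S₃ ∧
    (G.induce ((S₁ ∪ S₂ ∪ S₃)ᶜ)).cliqueNum ≤ G.cliqueNum - 2

/-- A quasi-line graph: every neighborhood is the union of two cliques. -/
def IsQuasiLine {V : Type*} (G : SimpleGraph V) : Prop :=
  ∀ v : V, ∃ K₁ K₂ : Set V, G.IsClique K₁ ∧ G.IsClique K₂ ∧
    G.neighborSet v = K₁ ∪ K₂

/-- A clique cutset: a clique whose removal increases the number of
connected components. -/
def HasCliqueCutset {V : Type*} (G : SimpleGraph V) : Prop :=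
  ∃ Q : Set V, G.IsClique Q ∧
    Nat.card G.ConnectedComponent < Nat.card (G.induce (Qᶜ)).ConnectedComponent

/-- An atom is a graph with no clique cutset. -/
def IsGraphAtom {V : Type*} (G : SimpleGraph V) : Prop := ¬ HasCliqueCutset G

/-- A perfect graph: every induced subgraph has chromatic number equal to
its clique number. -/
def IsPerfect {V : Type*} (G : SimpleGraph V) : Prop :=
  ∀ S : Set V, (G.induce S).chromaticNumber = ((G.induce S).cliqueNum : ℕ∞)

/-!
Let `C` be the circulant graph on `ℤ/20` with jumps `±1, ±3, ±8, 10`, and let `H` be the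
complement of `C` with every vertex replaced by a clique of size `k`. Since `C` is
triangle-free, `H` has no stable set of size `3`, so each colour class has at most two of the
`20k` vertices and `χ(H) ≥ 10k`. The clique number of `H` is `k · α(C) = 7k`: the upper bound
`α(C) ≤ 7` comes from averaging over the rotations of `C` the number of vertices of a stable set
among the `8` vertices congruent to `0` or `2` mod `5`, which span no stable set of size `4`.
Finally a `4`-wheel in `H` would project injectively onto `Cᶜ` (the wheel has no true twins),
i.e. `C` would contain an induced `2K₂` together with a vertex anticomplete to it, and in `C`
every induced `2K₂` is dominating.
-/

namespace SimpleGraph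

open Finset

variable {U W V : Type*} {F : SimpleGraph U} {H : SimpleGraph W} {G : SimpleGraph V}

theorem InducedFree.mono (h : InducedFree F G) (e : F ↪g H) : InducedFree H G :=
  ⟨fun f => IsEmpty.elim h (f.comp e)⟩

theorem InducedFree.compl_of_compl (h : InducedFree Hᶜ G) : InducedFree H Gᶜ :=
  ⟨fun f => IsEmpty.elim h (by simpa using Embedding.complEquiv f)⟩

theorem InducedFree.pathGraph_five (h : InducedFree (⊥ : SimpleGraph (Fin 3)) G) :
    InducedFree (pathGraph 5) G :=
  h.mono ⟨⟨![0, 2, 4], by decide⟩, by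
    intro a b
    simp only [Function.Embedding.coeFn_mk, pathGraph_adj, bot_adj, iff_false]
    revert a b
    decide⟩

theorem IsIndepSet.card_lt_of_inducedFree {n : ℕ}
    (hG : InducedFree (⊥ : SimpleGraph (Fin n)) G) {t : Finset V} (ht : G.IsIndepSet t) :
    #t < n := by
  by_contra! hnt
  obtain ⟨e⟩ : Nonempty (Fin n ↪ t) := Function.Embedding.nonempty_of_card_le (by simpa)
  refine IsEmpty.elim hG ⟨e.trans (Function.Embedding.subtype _), fun {i j} => ?_⟩
  simp only [Function.Embedding.trans_apply, Function.Embedding.subtype_apply, bot_adj,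
    iff_false]
  exact fun hadj => ht (e i).2 (e j).2 hadj.ne hadj

theorem Colorable.card_le_mul_of_inducedFree [Fintype V] {n m : ℕ}
    (hG : InducedFree (⊥ : SimpleGraph (Fin (n + 1))) G) (hc : G.Colorable m) :
    Fintype.card V ≤ n * m := by
  classical
  obtain ⟨c⟩ := hc
  have hclass (i : Fin m) : #{v | c v = i} ≤ n := by
    refine Nat.lt_succ_iff.1 (IsIndepSet.card_lt_of_inducedFree hG ?_)
    simpa [Coloring.colorClass, Set.ext_iff] using c.isIndepSet_colorClass i
  simpa using card_le_mul_card_image_of_maps_to (s := univ) (t := univ)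
    (fun v _ => mem_univ (c v)) n fun i _ => hclass i

def HasNoTrueTwins (H : SimpleGraph W) : Prop :=
  ∀ ⦃a b⦄, H.Adj a b → ∃ c, c ≠ a ∧ c ≠ b ∧ ¬(H.Adj a c ↔ H.Adj b c)

/-- The lexicographic product `G[K_k]`. -/
def cliqueBlowup (G : SimpleGraph V) (k : ℕ) : SimpleGraph (V × Fin k) where
  Adj x y := x ≠ y ∧ (x.1 = y.1 ∨ G.Adj x.1 y.1)
  symm := ⟨fun _ _ h => ⟨h.1.symm, h.2.imp Eq.symm G.adj_symm⟩⟩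
  loopless := ⟨fun _ h => h.1 rfl⟩

@[simp]
theorem cliqueBlowup_adj {k : ℕ} {x y : V × Fin k} :
    (G.cliqueBlowup k).Adj x y ↔ x ≠ y ∧ (x.1 = y.1 ∨ G.Adj x.1 y.1) :=
  Iff.rfl

theorem InducedFree.cliqueBlowup (hH : H.HasNoTrueTwins) (h : InducedFree H G) (k : ℕ) :
    InducedFree H (G.cliqueBlowup k) := by
  refine ⟨fun f => IsEmpty.elim h ?_⟩
  have hf {a b} : H.Adj a b ↔ a ≠ b ∧ ((f a).1 = (f b).1 ∨ G.Adj (f a).1 (f b).1) := by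
    rw [← f.map_adj_iff, cliqueBlowup_adj, f.injective.ne_iff]
  have hinj : Function.Injective fun a => (f a).1 := by
    intro a b hab
    by_contra hne
    obtain ⟨c, hca, hcb, hc⟩ := hH (hf.2 ⟨hne, Or.inl hab⟩)
    simp only at hab
    exact hc (by rw [hf, hf, hab]; simp [hca.symm, hcb.symm])
  refine ⟨⟨fun a => (f a).1, hinj⟩, fun {a b} => ?_⟩
  simp only [Function.Embedding.coeFn_mk, hf]
  exact ⟨fun hG => ⟨fun hab => hG.ne (hab ▸ rfl), Or.inr hG⟩,
    fun ⟨hne, h⟩ => h.resolve_left (hinj.ne hne)⟩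

theorem cliqueNum_cliqueBlowup [Finite V] (G : SimpleGraph V) (k : ℕ) :
    (G.cliqueBlowup k).cliqueNum = G.cliqueNum * k := by
  classical
  apply le_antisymm
  · obtain ⟨s, hs⟩ := (G.cliqueBlowup k).exists_isNClique_cliqueNum
    have hfiber (v : V) : #{x ∈ s | x.1 = v} ≤ k := by
      calc #{x ∈ s | x.1 = v} ≤ #(univ : Finset (Fin k)) :=
            card_le_card_of_injOn Prod.snd (fun _ _ => mem_coe.2 (mem_univ _)) fun x hx y hy hxy =>
              Prod.ext ((mem_filter.1 hx).2.trans (mem_filter.1 hy).2.symm) hxy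
        _ = k := by simp
    have himage : G.IsClique (s.image Prod.fst : Set V) := by
      simp only [coe_image]
      rintro _ ⟨x, hx, rfl⟩ _ ⟨y, hy, rfl⟩ hxy
      exact ((hs.isClique hx hy (fun h => hxy (h ▸ rfl))).2.resolve_left hxy)
    rw [← hs.card_eq, mul_comm]
    calc #s ≤ k * #(s.image Prod.fst) := card_le_mul_card_image s k fun v _ => hfiber v
      _ ≤ k * G.cliqueNum := by gcongr; exact himage.card_le_cliqueNum
  · obtain ⟨s, hs⟩ := G.exists_isNClique_cliqueNum
    have hclique :
        (G.cliqueBlowup k).IsClique ((s ×ˢ univ : Finset (V × Fin k)) : Set (V × Fin k)) := by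
      intro x hx y hy hxy
      simp only [coe_product, coe_univ, Set.mem_prod, mem_coe, Set.mem_univ, and_true] at hx hy
      exact ⟨hxy, (eq_or_ne x.1 y.1).imp_right (hs.isClique hx hy)⟩
    simpa [hs.card_eq] using hclique.card_le_cliqueNum

section Circulant

variable {A : Type*} [AddCommGroup A] {s : Set A}

theorem circulantGraph_adj_sub_sub {u v d : A} :
    (circulantGraph s).Adj (u - d) (v - d) ↔ (circulantGraph s).Adj u v := by
  simpa only [sub_eq_add_neg] using circulantGraph_adj_translate (d := -d)

variable [Fintype A] [DecidableEq A]

/-- Count the pairs `(v, r)` with `v` in a maximum stable set and `v - r ∈ W`. -/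
theorem indepNum_circulantGraph_mul_card_le {W : Finset A} {a : ℕ}
    (hW : (circulantGraph s).IndepSetFreeOn W (a + 1)) :
    (circulantGraph s).indepNum * #W ≤ a * Fintype.card A := by
  obtain ⟨I, hI⟩ := (circulantGraph s).exists_isNIndepSet_indepNum
  have htranslate (r : A) : #{v ∈ I | v - r ∈ W} ≤ a := by
    rw [← card_image_of_injective _ (sub_left_injective (b := r))]
    set t := {v ∈ I | v - r ∈ W}.image (· - r)
    have htW : t ⊆ W := fun x hx => by
      obtain ⟨u, hu, rfl⟩ := mem_image.1 hx
      exact (mem_filter.1 hu).2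
    have htI : (circulantGraph s).IsIndepSet (t : Set A) := by
      simp only [t, coe_image, coe_filter]
      rintro _ ⟨u, hu, rfl⟩ _ ⟨v, hv, rfl⟩ huv
      rw [circulantGraph_adj_sub_sub]
      exact hI.isIndepSet hu.1 hv.1 (fun h => huv (h ▸ rfl))
    by_contra! hat
    obtain ⟨t', ht't, ht'⟩ := exists_subset_card_eq (Nat.succ_le_of_lt hat)
    exact hW (coe_subset.2 (ht't.trans htW)) ⟨htI.mono (coe_subset.2 ht't), ht'⟩
  have hcount (v : A) : #{r | v - r ∈ W} = #W :=
    card_equiv (Equiv.subLeft v) fun r => by simp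
  calc (circulantGraph s).indepNum * #W
        = ∑ v ∈ I, #(univ.bipartiteBelow (fun r v => v - r ∈ W) v) := by
        simp [bipartiteBelow, hcount, hI.card_eq]
    _ = ∑ r, #(I.bipartiteAbove (fun r v => v - r ∈ W) r) :=
        (sum_card_bipartiteAbove_eq_sum_card_bipartiteBelow _).symm
    _ ≤ ∑ _r : A, a := sum_le_sum fun r _ => htranslate r
    _ = a * Fintype.card A := by simp [mul_comm]

end Circulant

end SimpleGraph

instance (k : ℕ) : DecidableRel (wheel k).Adj :=
  fun _ _ => decidable_of_iff _ (fromRel_adj _ _ _).symm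

theorem hasNoTrueTwins_wheel_four : (wheel 4).HasNoTrueTwins := by
  intro a b
  revert a b
  decide

open Finset

abbrev circulant20 : SimpleGraph (Fin 20) := circulantGraph {1, 3, 8, 10}

theorem circulant20_not_adj_of_adj_of_adj :
    ∀ a b c : Fin 20, circulant20.Adj a b → circulant20.Adj b c → ¬circulant20.Adj a c := by
  decide +kernel

set_option synthInstance.maxSize 100000 in
set_option synthInstance.maxHeartbeats 400000 in
theorem circulant20_induced_twoK2_at_zero_dominating :
    ∀ p₂ : Fin 20, circulant20.Adj 0 p₂ → ∀ p₁, ¬circulant20.Adj 0 p₁ → ¬circulant20.Adj p₁ p₂ →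
      ∀ p₃, circulant20.Adj p₁ p₃ → ¬circulant20.Adj p₂ p₃ → ¬circulant20.Adj p₃ 0 →
      ∀ q, circulant20.Adj q 0 ∨ circulant20.Adj q p₁ ∨ circulant20.Adj q p₂ ∨
        circulant20.Adj q p₃ := by
  decide +kernel

theorem circulant20_induced_twoK2_dominating {p₀ p₁ p₂ p₃ : Fin 20}
    (h₀₂ : circulant20.Adj p₀ p₂) (h₀₁ : ¬circulant20.Adj p₀ p₁) (h₁₂ : ¬circulant20.Adj p₁ p₂)
    (h₁₃ : circulant20.Adj p₁ p₃) (h₂₃ : ¬circulant20.Adj p₂ p₃) (h₃₀ : ¬circulant20.Adj p₃ p₀)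
    (q : Fin 20) :
    circulant20.Adj q p₀ ∨ circulant20.Adj q p₁ ∨ circulant20.Adj q p₂ ∨ circulant20.Adj q p₃ := by
  have h := circulant20_induced_twoK2_at_zero_dominating
  rw [← sub_self p₀] at h
  simpa only [circulantGraph_adj_sub_sub] using
    h (p₂ - p₀) (by rwa [circulantGraph_adj_sub_sub]) (p₁ - p₀) (by rwa [circulantGraph_adj_sub_sub])
      (by rwa [circulantGraph_adj_sub_sub]) (p₃ - p₀) (by rwa [circulantGraph_adj_sub_sub])
      (by rwa [circulantGraph_adj_sub_sub]) (by rwa [circulantGraph_adj_sub_sub]) (q - p₀)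

theorem inducedFree_bot_three_compl_circulant20 :
    InducedFree (⊥ : SimpleGraph (Fin 3)) circulant20ᶜ := by
  refine InducedFree.compl_of_compl ⟨fun f => ?_⟩
  have hf {i j : Fin 3} (hij : i ≠ j) : circulant20.Adj (f i) (f j) :=
    f.map_adj_iff.2 (by simpa using hij)
  exact circulant20_not_adj_of_adj_of_adj _ _ _ (hf (by decide : (0 : Fin 3) ≠ 1))
    (hf (by decide : (1 : Fin 3) ≠ 2)) (hf (by decide : (0 : Fin 3) ≠ 2))

theorem inducedFree_wheel_four_compl_circulant20 : InducedFree (wheel 4) circulant20ᶜ := by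
  refine InducedFree.compl_of_compl ⟨fun f => ?_⟩
  have hf {x y} : circulant20.Adj (f x) (f y) ↔ x ≠ y ∧ ¬(wheel 4).Adj x y := by
    rw [f.map_adj_iff, compl_adj]
  have adj {x y} (h : x ≠ y ∧ ¬(wheel 4).Adj x y) := hf.2 h
  have nonadj {x y} (h : (wheel 4).Adj x y) : ¬circulant20.Adj (f x) (f y) :=
    fun h' => (hf.1 h').2 h
  have hdom := circulant20_induced_twoK2_dominating (p₀ := f (.inl 0)) (p₁ := f (.inl 1))
    (p₂ := f (.inl 2)) (p₃ := f (.inl 3)) (adj (by decide)) (nonadj (by decide))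
    (nonadj (by decide)) (adj (by decide)) (nonadj (by decide)) (nonadj (by decide)) (f (.inr ()))
  rcases hdom with h | h | h | h <;> exact nonadj (by decide) h

def zeroTwoMod5 : Finset (Fin 20) := {v | v.val % 5 = 0 ∨ v.val % 5 = 2}

set_option synthInstance.maxSize 100000 in
set_option synthInstance.maxHeartbeats 400000 in
theorem circulant20_indep_triple_maximal_in_zeroTwoMod5 :
    ∀ a ∈ zeroTwoMod5, ∀ b ∈ zeroTwoMod5, a ≠ b → ¬circulant20.Adj a b →
      ∀ c ∈ zeroTwoMod5, a ≠ c → b ≠ c → ¬circulant20.Adj a c → ¬circulant20.Adj b c →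
      ∀ d ∈ zeroTwoMod5, ¬circulant20.Adj a d → ¬circulant20.Adj b d → ¬circulant20.Adj c d →
      d = a ∨ d = b ∨ d = c := by
  decide +kernel

theorem circulant20_indepSetFreeOn_zeroTwoMod5 : circulant20.IndepSetFreeOn zeroTwoMod5 4 := by
  intro t ht ⟨hI, hcard⟩
  rw [coe_subset] at ht
  obtain ⟨a, ha⟩ := card_pos.1 (by omega : 0 < #t)
  obtain ⟨b, c, d, hb, hc, hd, hbc, hbd, hcd⟩ :=
    two_lt_card_iff.1 (by rw [card_erase_of_mem ha]; omega : 2 < #(t.erase a))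
  rw [mem_erase] at hb hc hd
  rcases circulant20_indep_triple_maximal_in_zeroTwoMod5 a (ht ha) b (ht hb.2) hb.1.symm
    (hI ha hb.2 hb.1.symm) c (ht hc.2) hc.1.symm hbc (hI ha hc.2 hc.1.symm) (hI hb.2 hc.2 hbc) d
    (ht hd.2) (hI ha hd.2 hd.1.symm) (hI hb.2 hd.2 hbd) (hI hc.2 hd.2 hcd) with h | h | h
  exacts [hd.1 h, hbd h.symm, hcd h.symm]

theorem indepNum_circulant20 : circulant20.indepNum = 7 := by
  apply le_antisymm
  · have h : circulant20.indepNum * #zeroTwoMod5 ≤ 3 * Fintype.card (Fin 20) :=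
      indepNum_circulantGraph_mul_card_le circulant20_indepSetFreeOn_zeroTwoMod5
    rw [show #zeroTwoMod5 = 8 by decide +kernel, Fintype.card_fin] at h
    omega
  · have hI : circulant20.IsIndepSet
        (({0, 2, 4, 6, 11, 13, 15} : Finset (Fin 20)) : Set (Fin 20)) := by
      decide +kernel
    simpa using hI.card_le_indepNum

theorem stmt_1_general (k : ℕ) :
    ∃ (V : Type) (_ : Fintype V) (H : SimpleGraph V),
      InducedFree (⊥ : SimpleGraph (Fin 3)) H ∧
      InducedFree (wheel 4) H ∧
      InducedFree (SimpleGraph.pathGraph 5) H ∧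
      H.cliqueNum = 7 * k ∧
      ((10 * k : ℕ) : ℕ∞) ≤ H.chromaticNumber ∧
      10 * (H.cliqueNum : ℕ∞) ≤ 7 * H.chromaticNumber := by
  set H := circulant20ᶜ.cliqueBlowup k
  have h3K₁ : InducedFree (⊥ : SimpleGraph (Fin 3)) H :=
    inducedFree_bot_three_compl_circulant20.cliqueBlowup (fun _ _ => False.elim) k
  have hω : H.cliqueNum = 7 * k := by
    rw [cliqueNum_cliqueBlowup, cliqueNum_compl, indepNum_circulant20]
  have hχ : ((10 * k : ℕ) : ℕ∞) ≤ H.chromaticNumber :=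
    le_chromaticNumber_iff_colorable.2 fun m hm => by
      have h := hm.card_le_mul_of_inducedFree (n := 2) h3K₁
      rw [Fintype.card_prod, Fintype.card_fin, Fintype.card_fin] at h
      exact_mod_cast (by omega : 10 * k ≤ m)
  refine ⟨_, inferInstance, H, h3K₁,
    inducedFree_wheel_four_compl_circulant20.cliqueBlowup hasNoTrueTwins_wheel_four k,
    h3K₁.pathGraph_five, hω, hχ, ?_⟩
  calc 10 * (H.cliqueNum : ℕ∞) = 7 * ((10 * k : ℕ) : ℕ∞) := by rw [hω]; push_cast; ring
    _ ≤ 7 * H.chromaticNumber := by gcongr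

theorem stmt_1 (k : ℕ) (hk : 0 < k) :
    ∃ (V : Type) (_ : Fintype V) (H : SimpleGraph V),
      InducedFree (⊥ : SimpleGraph (Fin 3)) H ∧
      InducedFree (wheel 4) H ∧
      InducedFree (SimpleGraph.pathGraph 5) H ∧
      H.cliqueNum = 7 * k ∧
      ((10 * k : ℕ) : ℕ∞) ≤ H.chromaticNumber ∧
      10 * (H.cliqueNum : ℕ∞) ≤ 7 * H.chromaticNumber :=
  stmt_1_general k
end

section
/- Let G be a P_5-free graph. Let A, B_1, B_2 be three disjoint, nonempty, pairwise anticomplete subsets of V(G). Let x and y be two nonadjacent vertices in V(G) ∖ (A ∪ B_1 ∪ B_2) such that x and y have a common neighbor in A, x has a neighbor in B_1, and y has a neighbor in B_2. Then x and y have a common neighbor in B_1 or in B_2. -/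
open SimpleGraph

def SimpleGraph.Embedding.ofAdjIff {W V : Type*} {H : SimpleGraph W} {G : SimpleGraph V}
    (hH : ∀ i j, (∀ k, H.Adj i k ↔ H.Adj j k) → i = j) (f : W → V)
    (hf : ∀ i j, G.Adj (f i) (f j) ↔ H.Adj i j) : H ↪g G where
  toFun := f
  inj' i j hij := hH i j fun k => by rw [← hf, ← hf, hij]
  map_rel_iff' := hf _ _

lemma pathGraph_adj_iff_of_consecutive {V : Type*} {G : SimpleGraph V} {n : ℕ} (f : Fin n → V)
    (hadj : ∀ i j : Fin n, i.val + 1 = j.val → G.Adj (f i) (f j))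
    (hnadj : ∀ i j : Fin n, i.val + 1 < j.val → ¬ G.Adj (f i) (f j)) (i j : Fin n) :
    G.Adj (f i) (f j) ↔ (pathGraph n).Adj i j := by
  rw [pathGraph_adj]
  rcases lt_trichotomy (i.val + 1) j.val with hij | hij | hij
  · exact iff_of_false (hnadj i j hij) (by omega)
  · exact iff_of_true (hadj i j hij) (Or.inl hij)
  rcases lt_trichotomy (j.val + 1) i.val with hji | hji | hji
  · exact iff_of_false (fun h => hnadj j i hji h.symm) (by omega)
  · exact iff_of_true (hadj j i hji).symm (Or.inr hji)
  · have : i = j := Fin.ext (by omega)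
    subst this
    exact iff_of_false G.irrefl (by omega)

lemma pathGraph_five_eq_of_adj_iff :
    ∀ i j : Fin 5, (∀ k, (pathGraph 5).Adj i k ↔ (pathGraph 5).Adj j k) → i = j := by
  simp only [pathGraph_adj]
  decide

lemma InducedFree.not_induced_path_five {V : Type*} {G : SimpleGraph V}
    (hG : InducedFree (pathGraph 5) G) {v₀ v₁ v₂ v₃ v₄ : V}
    (h₀₁ : G.Adj v₀ v₁) (h₁₂ : G.Adj v₁ v₂) (h₂₃ : G.Adj v₂ v₃) (h₃₄ : G.Adj v₃ v₄)
    (n₀₂ : ¬ G.Adj v₀ v₂) (n₀₃ : ¬ G.Adj v₀ v₃) (n₀₄ : ¬ G.Adj v₀ v₄)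
    (n₁₃ : ¬ G.Adj v₁ v₃) (n₁₄ : ¬ G.Adj v₁ v₄) (n₂₄ : ¬ G.Adj v₂ v₄) : False := by
  refine hG.false (Embedding.ofAdjIff pathGraph_five_eq_of_adj_iff ![v₀, v₁, v₂, v₃, v₄]
    (pathGraph_adj_iff_of_consecutive _ ?_ ?_)) <;>
  · intro i j hij
    fin_cases i <;> fin_cases j <;> simp_all

theorem stmt_7_general {V : Type*} (G : SimpleGraph V)
    (hP5 : InducedFree (SimpleGraph.pathGraph 5) G)
    (A B₁ B₂ : Set V)
    (hanti₁ : ∀ a ∈ A, ∀ b ∈ B₁, ¬ G.Adj a b)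
    (hanti₂ : ∀ a ∈ A, ∀ b ∈ B₂, ¬ G.Adj a b)
    (hanti₃ : ∀ a ∈ B₁, ∀ b ∈ B₂, ¬ G.Adj a b)
    (x y : V) (hnadj : ¬ G.Adj x y)
    (hcn : ∃ a ∈ A, G.Adj x a ∧ G.Adj y a)
    (hxB : ∃ b ∈ B₁, G.Adj x b) (hyB : ∃ b ∈ B₂, G.Adj y b) :
    (∃ b ∈ B₁, G.Adj x b ∧ G.Adj y b) ∨ (∃ b ∈ B₂, G.Adj x b ∧ G.Adj y b) := by
  by_contra! ⟨hyB₁, hxB₂⟩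
  obtain ⟨a, ha, hxa, hya⟩ := hcn
  obtain ⟨b₁, hb₁, hxb₁⟩ := hxB
  obtain ⟨b₂, hb₂, hyb₂⟩ := hyB
  -- otherwise `b₁ x a y b₂` is an induced `P₅`
  exact hP5.not_induced_path_five hxb₁.symm hxa hya.symm hyb₂
    (fun h => hanti₁ a ha b₁ hb₁ h.symm) (fun h => hyB₁ b₁ hb₁ hxb₁ h.symm) (hanti₃ b₁ hb₁ b₂ hb₂)
    hnadj (fun h => hxB₂ b₂ hb₂ h hyb₂) (hanti₂ a ha b₂ hb₂)

theorem stmt_7 {V : Type*} [Fintype V] (G : SimpleGraph V)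
    (hP5 : InducedFree (SimpleGraph.pathGraph 5) G)
    (A B₁ B₂ : Set V)
    (hA : A.Nonempty) (hB₁ : B₁.Nonempty) (hB₂ : B₂.Nonempty)
    (hd₁ : Disjoint A B₁) (hd₂ : Disjoint A B₂) (hd₃ : Disjoint B₁ B₂)
    (hanti₁ : ∀ a ∈ A, ∀ b ∈ B₁, ¬ G.Adj a b)
    (hanti₂ : ∀ a ∈ A, ∀ b ∈ B₂, ¬ G.Adj a b)
    (hanti₃ : ∀ a ∈ B₁, ∀ b ∈ B₂, ¬ G.Adj a b)
    (x y : V) (hx : x ∉ A ∪ B₁ ∪ B₂) (hy : y ∉ A ∪ B₁ ∪ B₂)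
    (hxy : x ≠ y) (hnadj : ¬ G.Adj x y)
    (hcn : ∃ a ∈ A, G.Adj x a ∧ G.Adj y a)
    (hxB : ∃ b ∈ B₁, G.Adj x b) (hyB : ∃ b ∈ B₂, G.Adj y b) :
    (∃ b ∈ B₁, G.Adj x b ∧ G.Adj y b) ∨ (∃ b ∈ B₂, G.Adj x b ∧ G.Adj y b) :=
  stmt_7_general G hP5 A B₁ B₂ hanti₁ hanti₂ hanti₃ x y hnadj hcn hxB hyB
end

section
/- Let G be a graph and let D_1, D_2, D_3 be three disjoint nonempty subsets of V(G), each inducing a P_3-free subgraph (so for each i, G[D_i] is a disjoint union of cliques; its maximal cliques are called D_i-cliques). Suppose that for all i ≠ j, every D_i-clique is either complete or anticomplete to every D_j-clique. For i = 1, 2, let R_i ⊆ D_i be a stable set containing exactly one vertex from each D_i-clique. If M is a maximal clique of G[D_1 ∪ D_2 ∪ D_3] containing at least one vertex of D_1 and at least one vertex of D_2, then (R_1 ∪ R_2) ∩ M contains at least two vertices. -/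
open SimpleGraph

/-- `K` is a maximal clique of the subgraph of `G` induced by `D`
(equivalently, a maximal clique of `G` among those contained in `D`). -/
def IsMaxCliqueWithin {V : Type*} (G : SimpleGraph V) (D K : Set V) : Prop :=
  K ⊆ D ∧ G.IsClique K ∧ ∀ K' : Set V, K ⊆ K' → K' ⊆ D → G.IsClique K' → K' = K

/-!
Let `K` be the `D_i`-clique containing `M ∩ D_i` and `r` its representative. Every vertex `y` of
`M` outside `D_i` lies in some `D_j`-clique which is adjacent to a vertex of `M ∩ D_i ⊆ K`, hence
complete to `K`; so `r` is adjacent to all of `M` and, by maximality, `r ∈ M`. Doing this for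
`i = 1, 2` gives two representatives in `M`, distinct since `D_1` and `D_2` are disjoint.
-/

lemma exists_isMaxCliqueWithin_superset {V : Type*} [Finite V] (G : SimpleGraph V)
    {D C : Set V} (hCD : C ⊆ D) (hC : G.IsClique C) :
    ∃ K, C ⊆ K ∧ IsMaxCliqueWithin G D K := by
  obtain ⟨K, hK, hmax⟩ := Set.Finite.exists_maximalFor id
    {K | C ⊆ K ∧ K ⊆ D ∧ G.IsClique K} (Set.toFinite _) ⟨C, subset_rfl, hCD, hC⟩
  exact ⟨K, hK.1, hK.2.1, hK.2.2,
    fun K' hKK' hK'D hK' => le_antisymm (hmax ⟨hK.1.trans hKK', hK'D, hK'⟩ hKK') hKK'⟩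

lemma IsMaxCliqueWithin.mem_of_forall_adj {V : Type*} {G : SimpleGraph V} {S M : Set V} {v : V}
    (hM : IsMaxCliqueWithin G S M) (hv : v ∈ S) (hadj : ∀ y ∈ M, v ≠ y → G.Adj v y) : v ∈ M := by
  have heq := hM.2.2 (insert v M) (Set.subset_insert v M) (Set.insert_subset hv hM.1)
    (hM.2.1.insert hadj)
  exact heq ▸ Set.mem_insert v M

lemma IsMaxCliqueWithin.exists_mem_of_transversal {ι V : Type*} [Finite V] {G : SimpleGraph V}
    {D : ι → Set V} {S M R : Set V} {i : ι}
    (hcompanti : ∀ j, j ≠ i → ∀ K K' : Set V,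
      IsMaxCliqueWithin G (D i) K → IsMaxCliqueWithin G (D j) K' →
      (∀ a ∈ K, ∀ b ∈ K', G.Adj a b) ∨ (∀ a ∈ K, ∀ b ∈ K', ¬ G.Adj a b))
    (hR : ∀ K, IsMaxCliqueWithin G (D i) K → ∃ v, v ∈ R ∩ K)
    (hDS : D i ⊆ S) (hSD : S ⊆ ⋃ j, D j)
    (hM : IsMaxCliqueWithin G S M) (hMi : (M ∩ D i).Nonempty) :
    ∃ r ∈ R, r ∈ M := by
  obtain ⟨K, hMK, hK⟩ := exists_isMaxCliqueWithin_superset G (D := D i)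
    Set.inter_subset_right (hM.2.1.subset Set.inter_subset_left)
  obtain ⟨r, hrR, hrK⟩ := hR K hK
  refine ⟨r, hrR, hM.mem_of_forall_adj (hDS (hK.1 hrK)) fun y hyM hry => ?_⟩
  by_cases hyi : y ∈ D i
  · exact hK.2.1 hrK (hMK ⟨hyM, hyi⟩) hry
  obtain ⟨j, hyj⟩ := Set.mem_iUnion.mp (hSD (hM.1 hyM))
  have hji : j ≠ i := fun h => hyi (h ▸ hyj)
  obtain ⟨K', hyK', hK'⟩ := exists_isMaxCliqueWithin_superset G (D := D j)
    (Set.singleton_subset_iff.mpr hyj) (Set.pairwise_singleton y G.Adj)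
  obtain ⟨v, hvM, hvi⟩ := hMi
  have hvy : G.Adj v y := hM.2.1 hvM hyM fun h => hyi (h ▸ hvi)
  rcases hcompanti j hji K K' hK hK' with hcomplete | hanti
  · exact hcomplete r hrK y (hyK' rfl)
  · exact absurd hvy (hanti v (hMK ⟨hvM, hvi⟩) y (hyK' rfl))

theorem stmt_9_general {V : Type*} [Fintype V] (G : SimpleGraph V)
    (D : Fin 3 → Set V)
    (hdisj : ∀ i j, i ≠ j → Disjoint (D i) (D j))
    (hcompanti : ∀ i j : Fin 3, i ≠ j → ∀ K K' : Set V,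
      IsMaxCliqueWithin G (D i) K → IsMaxCliqueWithin G (D j) K' →
      (∀ a ∈ K, ∀ b ∈ K', G.Adj a b) ∨ (∀ a ∈ K, ∀ b ∈ K', ¬ G.Adj a b))
    (R₁ R₂ : Set V)
    (hR₁sub : R₁ ⊆ D 0)
    (hR₁one : ∀ K, IsMaxCliqueWithin G (D 0) K → ∃! v, v ∈ R₁ ∩ K)
    (hR₂sub : R₂ ⊆ D 1)
    (hR₂one : ∀ K, IsMaxCliqueWithin G (D 1) K → ∃! v, v ∈ R₂ ∩ K)
    (M : Set V)
    (hM : IsMaxCliqueWithin G (D 0 ∪ D 1 ∪ D 2) M)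
    (hM₁ : (M ∩ D 0).Nonempty) (hM₂ : (M ∩ D 1).Nonempty) :
    ∃ a ∈ (R₁ ∪ R₂) ∩ M, ∃ b ∈ (R₁ ∪ R₂) ∩ M, a ≠ b := by
  have hSD : D 0 ∪ D 1 ∪ D 2 ⊆ ⋃ j, D j := by
    rintro x ((hx | hx) | hx)
    exacts [Set.mem_iUnion_of_mem 0 hx, Set.mem_iUnion_of_mem 1 hx, Set.mem_iUnion_of_mem 2 hx]
  obtain ⟨r₁, hr₁R, hr₁M⟩ := hM.exists_mem_of_transversal (fun j hj => hcompanti 0 j hj.symm)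
    (fun K hK => (hR₁one K hK).exists) (by intro x hx; simp [hx]) hSD hM₁
  obtain ⟨r₂, hr₂R, hr₂M⟩ := hM.exists_mem_of_transversal (fun j hj => hcompanti 1 j hj.symm)
    (fun K hK => (hR₂one K hK).exists) (by intro x hx; simp [hx]) hSD hM₂
  refine ⟨r₁, ⟨Or.inl hr₁R, hr₁M⟩, r₂, ⟨Or.inr hr₂R, hr₂M⟩, fun h => ?_⟩
  exact Set.disjoint_left.mp (hdisj 0 1 (by decide)) (hR₁sub hr₁R) (h ▸ hR₂sub hr₂R)

theorem stmt_9 {V : Type*} [Fintype V] (G : SimpleGraph V)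
    (D : Fin 3 → Set V)
    (hne : ∀ i, (D i).Nonempty)
    (hdisj : ∀ i j, i ≠ j → Disjoint (D i) (D j))
    (hP3 : ∀ i, InducedFree (SimpleGraph.pathGraph 3) (G.induce (D i)))
    (hcompanti : ∀ i j : Fin 3, i ≠ j → ∀ K K' : Set V,
      IsMaxCliqueWithin G (D i) K → IsMaxCliqueWithin G (D j) K' →
      (∀ a ∈ K, ∀ b ∈ K', G.Adj a b) ∨ (∀ a ∈ K, ∀ b ∈ K', ¬ G.Adj a b))
    (R₁ R₂ : Set V)
    (hR₁sub : R₁ ⊆ D 0) (hR₁st : IsStableSet G R₁)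
    (hR₁one : ∀ K, IsMaxCliqueWithin G (D 0) K → ∃! v, v ∈ R₁ ∩ K)
    (hR₂sub : R₂ ⊆ D 1) (hR₂st : IsStableSet G R₂)
    (hR₂one : ∀ K, IsMaxCliqueWithin G (D 1) K → ∃! v, v ∈ R₂ ∩ K)
    (M : Set V)
    (hM : IsMaxCliqueWithin G (D 0 ∪ D 1 ∪ D 2) M)
    (hM₁ : (M ∩ D 0).Nonempty) (hM₂ : (M ∩ D 1).Nonempty) :
    ∃ a ∈ (R₁ ∪ R₂) ∩ M, ∃ b ∈ (R₁ ∪ R₂) ∩ M, a ≠ b :=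
  stmt_9_general G D hdisj hcompanti R₁ R₂ hR₁sub hR₁one hR₂sub hR₂one M hM hM₁ hM₂
end

section
/- In the C_5-setup, V(G) = A ∪ X ∪ Y ∪ Z ∪ T. -/
open SimpleGraph

/-- The union `A = A₁ ∪ ⋯ ∪ A₅` of the `C₅`-setup. -/
def setA {V : Type*} (A : Fin 5 → Set V) : Set V := ⋃ i, A i

/-- `T`: vertices outside `A` with no neighbor in `A`. -/
def setT {V : Type*} (G : SimpleGraph V) (A : Fin 5 → Set V) : Set V :=
  {x | x ∉ setA A ∧ ∀ a ∈ setA A, ¬ G.Adj x a}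

/-- `Z`: vertices outside `A` with a neighbor in every `A i`. -/
def setZ {V : Type*} (G : SimpleGraph V) (A : Fin 5 → Set V) : Set V :=
  {x | x ∉ setA A ∧ ∀ i : Fin 5, ∃ a ∈ A i, G.Adj x a}

/-- `X i`: vertices outside `A` with a neighbor in each of `A i`, `A (i+2)`,
`A (i-2)`, and anticomplete to `A (i+1) ∪ A (i-1)`. -/
def setX {V : Type*} (G : SimpleGraph V) (A : Fin 5 → Set V) (i : Fin 5) : Set V :=
  {x | x ∉ setA A ∧ (∃ a ∈ A i, G.Adj x a) ∧ (∃ a ∈ A (i + 2), G.Adj x a) ∧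
    (∃ a ∈ A (i - 2), G.Adj x a) ∧ ∀ a ∈ A (i + 1) ∪ A (i - 1), ¬ G.Adj x a}

/-- `Y i`: vertices outside `A` with a neighbor in each `A j`, `j ≠ i`,
and anticomplete to `A i`. -/
def setY {V : Type*} (G : SimpleGraph V) (A : Fin 5 → Set V) (i : Fin 5) : Set V :=
  {x | x ∉ setA A ∧ (∀ j : Fin 5, j ≠ i → ∃ a ∈ A j, G.Adj x a) ∧
    ∀ a ∈ A i, ¬ G.Adj x a}

/-!
Let `v ∉ A` and let `N ⊆ ℤ/5` be the set of indices `i` such that `v` has a neighbour in `A i`.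
If `i ∈ N` but `i + 2, i + 3 ∉ N`, then by maximality of `A` some `w ∈ A (i ± 1)` is not adjacent
to `v`, and `v`, a neighbour of `v` in `A i`, `w` and vertices of `A (i + 2)`, `A (i + 3)` form an
induced `P₅`. Similarly `N = {i, i + 2}` is impossible, by maximality at `i + 1`. The only subsets
of `ℤ/5` passing both tests are `∅`, `ℤ/5`, the complements of points and the sets `{i, i ± 2}`,
which correspond to `T`, `Z`, `Y i` and `X i`.
-/

section

variable {V : Type*} {G : SimpleGraph V}

lemma InducedFree.false_of_path5 (hP5 : InducedFree (pathGraph 5) G) {a b c d e : V}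
    (hab : G.Adj a b) (hbc : G.Adj b c) (hcd : G.Adj c d) (hde : G.Adj d e)
    (hac : ¬ G.Adj a c) (had : ¬ G.Adj a d) (hae : ¬ G.Adj a e)
    (hbd : ¬ G.Adj b d) (hbe : ¬ G.Adj b e) (hce : ¬ G.Adj c e) : False := by
  have hac_ne : a ≠ c := by rintro rfl; exact had hcd
  have had_ne : a ≠ d := by rintro rfl; exact hac hcd.symm
  have hae_ne : a ≠ e := by rintro rfl; exact had hde.symm
  have hbd_ne : b ≠ d := by rintro rfl; exact had hab
  have hbe_ne : b ≠ e := by rintro rfl; exact hbd hde.symm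
  have hce_ne : c ≠ e := by rintro rfl; exact hbe hbc
  have hinj : Function.Injective ![a, b, c, d, e] := by
    intro x y hxy
    fin_cases x <;> fin_cases y <;> simp_all [hab.ne, hbc.ne, hcd.ne, hde.ne, eq_comm]
  refine hP5.false ⟨⟨![a, b, c, d, e], hinj⟩, fun {x y} => ?_⟩
  fin_cases x <;> fin_cases y <;>
    simp [pathGraph_adj, hab, hbc, hcd, hde, hab.symm, hbc.symm, hcd.symm, hde.symm, hac, had,
      hae, hbd, hbe, hce, mt Adj.symm hac, mt Adj.symm had, mt Adj.symm hae, mt Adj.symm hbd,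
      mt Adj.symm hbe, mt Adj.symm hce]

lemma Fin5.finset_cases (s : Finset (Fin 5))
    (h23 : ∀ i ∈ s, i + 2 ∈ s ∨ i + 3 ∈ s)
    (h134 : ∀ i ∈ s, i + 2 ∈ s → i + 1 ∈ s ∨ i + 3 ∈ s ∨ i + 4 ∈ s) :
    (∀ i, i ∉ s) ∨ (∀ i, i ∈ s) ∨ (∃ i, i ∉ s ∧ ∀ j, j ≠ i → j ∈ s) ∨
      ∃ i, i ∈ s ∧ i + 2 ∈ s ∧ i - 2 ∈ s ∧ i + 1 ∉ s ∧ i - 1 ∉ s := by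
  revert s
  decide

variable {A : Fin 5 → Set V} {v : V}

variable (G A) in
structure IsMaximalC5Blowup : Prop where
  nonempty : ∀ i : Fin 5, (A i).Nonempty
  adj_succ : ∀ i : Fin 5, ∀ a ∈ A i, ∀ b ∈ A (i + 1), G.Adj a b
  not_adj_add_two : ∀ i : Fin 5, ∀ a ∈ A i, ∀ b ∈ A (i + 2), ¬ G.Adj a b
  maximal : ∀ v : V, v ∉ setA A → ¬ ∃ i : Fin 5,
    (∀ a ∈ A (i - 1) ∪ A (i + 1), G.Adj v a) ∧ (∀ a ∈ A (i - 2) ∪ A (i + 2), ¬ G.Adj v a)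

namespace IsMaximalC5Blowup

lemma adj (hA : IsMaximalC5Blowup G A) {i j : Fin 5} {a b : V} (ha : a ∈ A i) (hb : b ∈ A j)
    (hij : j = i + 1 ∨ i = j + 1) : G.Adj a b := by
  rcases hij with rfl | rfl
  · exact hA.adj_succ i a ha b hb
  · exact (hA.adj_succ j b hb a ha).symm

lemma not_adj (hA : IsMaximalC5Blowup G A) {i j : Fin 5} {a b : V} (ha : a ∈ A i)
    (hb : b ∈ A j) (hij : j = i + 2 ∨ i = j + 2) : ¬ G.Adj a b := by
  rcases hij with rfl | rfl
  · exact hA.not_adj_add_two i a ha b hb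
  · exact fun h => hA.not_adj_add_two j b hb a ha h.symm

lemma exists_not_adj (hA : IsMaximalC5Blowup G A) (hv : v ∉ setA A) (i : Fin 5)
    (hanti : ∀ a ∈ A (i - 2) ∪ A (i + 2), ¬ G.Adj v a) :
    ∃ w ∈ A (i - 1) ∪ A (i + 1), ¬ G.Adj v w := by
  by_contra! h
  exact hA.maximal v hv ⟨i, h, hanti⟩

lemma exists_adj_add_two_or_add_three (hA : IsMaximalC5Blowup G A)
    (hP5 : InducedFree (pathGraph 5) G) (hv : v ∉ setA A) {j : Fin 5} {a : V} (ha : a ∈ A j)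
    (hva : G.Adj v a) : (∃ d ∈ A (j + 2), G.Adj v d) ∨ ∃ e ∈ A (j + 3), G.Adj v e := by
  by_contra! h
  obtain ⟨hv2, hv3⟩ := h
  obtain ⟨w, hw, hvw⟩ := hA.exists_not_adj hv j <| by
    rintro x (hx | hx)
    · exact hv3 x (by rwa [show j - 2 = j + 3 by omega] at hx)
    · exact hv2 x hx
  obtain ⟨d, hd⟩ := hA.nonempty (j + 2)
  obtain ⟨e, he⟩ := hA.nonempty (j + 3)
  rcases hw with hw | hw
  · rw [show j - 1 = j + 4 by omega] at hw
    -- `d - e - w - a - v`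
    exact hP5.false_of_path5 (hA.adj hd he (by omega)) (hA.adj he hw (by omega))
      (hA.adj hw ha (by omega)) hva.symm (hA.not_adj hd hw (by omega))
      (hA.not_adj hd ha (by omega)) (fun h => hv2 d hd h.symm) (hA.not_adj he ha (by omega))
      (fun h => hv3 e he h.symm) (fun h => hvw h.symm)
  · -- `e - d - w - a - v`
    exact hP5.false_of_path5 (hA.adj he hd (by omega)) (hA.adj hd hw (by omega))
      (hA.adj hw ha (by omega)) hva.symm (hA.not_adj he hw (by omega))
      (hA.not_adj he ha (by omega)) (fun h => hv3 e he h.symm) (hA.not_adj hd ha (by omega))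
      (fun h => hv2 d hd h.symm) (fun h => hvw h.symm)

lemma exists_adj_of_adj_of_adj_add_two (hA : IsMaximalC5Blowup G A)
    (hP5 : InducedFree (pathGraph 5) G) (hv : v ∉ setA A) {i : Fin 5} {a c : V} (ha : a ∈ A i)
    (hva : G.Adj v a) (hc : c ∈ A (i + 2)) (hvc : G.Adj v c) :
    (∃ b ∈ A (i + 1), G.Adj v b) ∨ (∃ b ∈ A (i + 3), G.Adj v b) ∨ ∃ b ∈ A (i + 4), G.Adj v b := by
  by_contra! h
  obtain ⟨hv1, hv3, hv4⟩ := h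
  obtain ⟨w, hw, hvw⟩ := hA.exists_not_adj hv (i + 1) <| by
    rintro x (hx | hx)
    · exact hv4 x (by rwa [show i + 1 - 2 = i + 4 by omega] at hx)
    · exact hv3 x (by rwa [show i + 1 + 2 = i + 3 by omega] at hx)
  obtain ⟨b, hb⟩ := hA.nonempty (i + 1)
  rcases hw with hw | hw
  · rw [show i + 1 - 1 = i by omega] at hw
    obtain ⟨e, he⟩ := hA.nonempty (i + 4)
    -- `v - c - b - w - e`
    exact hP5.false_of_path5 hvc (hA.adj hc hb (by omega)) (hA.adj hb hw (by omega))
      (hA.adj hw he (by omega)) (hv1 b hb) hvw (hv4 e he) (hA.not_adj hc hw (by omega))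
      (hA.not_adj hc he (by omega)) (hA.not_adj hb he (by omega))
  · rw [show i + 1 + 1 = i + 2 by omega] at hw
    obtain ⟨e, he⟩ := hA.nonempty (i + 3)
    -- `v - a - b - w - e`
    exact hP5.false_of_path5 hva (hA.adj ha hb (by omega)) (hA.adj hb hw (by omega))
      (hA.adj hw he (by omega)) (hv1 b hb) hvw (hv3 e he) (hA.not_adj ha hw (by omega))
      (hA.not_adj ha he (by omega)) (hA.not_adj hb he (by omega))

end IsMaximalC5Blowup

variable (G A v) in
open Classical in
noncomputable def nbrIndices : Finset (Fin 5) :=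
  {i | ∃ a ∈ A i, G.Adj v a}

lemma mem_nbrIndices {i : Fin 5} : i ∈ nbrIndices G A v ↔ ∃ a ∈ A i, G.Adj v a := by
  simp [nbrIndices]

lemma IsMaximalC5Blowup.nbrIndices_cases (hA : IsMaximalC5Blowup G A)
    (hP5 : InducedFree (pathGraph 5) G) (hv : v ∉ setA A) :
    let s := nbrIndices G A v
    (∀ i, i ∉ s) ∨ (∀ i, i ∈ s) ∨ (∃ i, i ∉ s ∧ ∀ j, j ≠ i → j ∈ s) ∨
      ∃ i, i ∈ s ∧ i + 2 ∈ s ∧ i - 2 ∈ s ∧ i + 1 ∉ s ∧ i - 1 ∉ s := by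
  refine Fin5.finset_cases _ ?_ ?_ <;> simp only [mem_nbrIndices]
  · rintro i ⟨a, ha, hva⟩
    exact hA.exists_adj_add_two_or_add_three hP5 hv ha hva
  · rintro i ⟨a, ha, hva⟩ ⟨c, hc, hvc⟩
    exact hA.exists_adj_of_adj_of_adj_add_two hP5 hv ha hva hc hvc

end

theorem stmt_10_general {V : Type*} (G : SimpleGraph V) (A : Fin 5 → Set V)
    (hP5 : InducedFree (SimpleGraph.pathGraph 5) G)
    (hAne : ∀ i : Fin 5, (A i).Nonempty)
    (hAcomp : ∀ i : Fin 5, ∀ a ∈ A i, ∀ b ∈ A (i + 1), G.Adj a b)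
    (hAanti : ∀ i : Fin 5, ∀ a ∈ A i, ∀ b ∈ A (i + 2), ¬ G.Adj a b)
    (hAmax : ∀ v : V, v ∉ setA A → ¬ ∃ i : Fin 5,
      (∀ a ∈ A (i - 1) ∪ A (i + 1), G.Adj v a) ∧
      (∀ a ∈ A (i - 2) ∪ A (i + 2), ¬ G.Adj v a)) :
    ∀ v : V, v ∈ setA A ∪ (⋃ i, setX G A i) ∪ (⋃ i, setY G A i) ∪
      setZ G A ∪ setT G A := by
  intro v
  by_cases hv : v ∈ setA A
  · exact .inl (.inl (.inl (.inl hv)))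
  have hA : IsMaximalC5Blowup G A := ⟨hAne, hAcomp, hAanti, hAmax⟩
  rcases hA.nbrIndices_cases hP5 hv with hT | hZ | ⟨i, hi, hY⟩ | ⟨i, hi, hi2, hi3, hi1, hi4⟩ <;>
    simp only [mem_nbrIndices, not_exists, not_and] at *
  · refine .inr ⟨hv, fun a ha hva => ?_⟩
    obtain ⟨i, hai⟩ := Set.mem_iUnion.1 ha
    exact hT i a hai hva
  · exact .inl (.inr ⟨hv, hZ⟩)
  · exact .inl (.inl (.inr (Set.mem_iUnion.2 ⟨i, hv, hY, hi⟩)))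
  · refine .inl (.inl (.inl (.inr (Set.mem_iUnion.2 ⟨i, hv, hi, hi2, hi3, ?_⟩))))
    rintro a (ha | ha)
    exacts [hi1 a ha, hi4 a ha]

theorem stmt_10 {V : Type*} [Fintype V] (G : SimpleGraph V) (A : Fin 5 → Set V)
    (hconn : G.Connected)
    (hP5 : InducedFree (SimpleGraph.pathGraph 5) G)
    (hW4 : InducedFree (wheel 4) G)
    (hatom : IsGraphAtom G)
    (hAne : ∀ i : Fin 5, (A i).Nonempty)
    (hAdisj : ∀ i j : Fin 5, i ≠ j → Disjoint (A i) (A j))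
    (hAcomp : ∀ i : Fin 5, ∀ a ∈ A i, ∀ b ∈ A (i + 1), G.Adj a b)
    (hAanti : ∀ i : Fin 5, ∀ a ∈ A i, ∀ b ∈ A (i + 2), ¬ G.Adj a b)
    (hAmax : ∀ v : V, v ∉ setA A → ¬ ∃ i : Fin 5,
      (∀ a ∈ A (i - 1) ∪ A (i + 1), G.Adj v a) ∧
      (∀ a ∈ A (i - 2) ∪ A (i + 2), ¬ G.Adj v a)) :
    ∀ v : V, v ∈ setA A ∪ (⋃ i, setX G A i) ∪ (⋃ i, setY G A i) ∪
      setZ G A ∪ setT G A :=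
  stmt_10_general G A hP5 hAne hAcomp hAanti hAmax
end

section
/- In the C_5-setup, for each i the subgraph of G induced by A_i is P_3-free. -/
open SimpleGraph

/-! An induced `P₃` `a - b - c` in `A i`, together with any `u ∈ A (i - 1)` and
`w ∈ A (i + 1)`, yields a `4`-wheel: the rim is the `C₄` `a - u - c - w` and `b` is the hub. -/

namespace SimpleGraph

variable {V : Type*} {G : SimpleGraph V}

theorem not_inducedFree_wheel_four {a b c d v : V} (hab : G.Adj a b) (hbc : G.Adj b c)
    (hcd : G.Adj c d) (hda : G.Adj d a) (hac : ¬ G.Adj a c) (hbd : ¬ G.Adj b d)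
    (hac_ne : a ≠ c) (hbd_ne : b ≠ d) (hva : G.Adj v a) (hvb : G.Adj v b) (hvc : G.Adj v c)
    (hvd : G.Adj v d) : ¬ InducedFree (wheel 4) G := by
  let g : Fin 4 ⊕ Unit → V := Sum.elim ![a, b, c, d] fun _ => v
  have hg : Function.Injective g := by
    rintro (x | x) (y | y) <;> (try fin_cases x) <;> (try fin_cases y) <;>
      simp [g, hab.ne, hbc.ne, hcd.ne, hda.ne, hva.ne, hvb.ne, hvc.ne, hvd.ne, hac_ne, hbd_ne,
        hab.ne', hbc.ne', hcd.ne', hda.ne', hva.ne', hvb.ne', hvc.ne', hvd.ne', hac_ne.symm,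
        hbd_ne.symm]
  have hadj : ∀ x y, G.Adj (g x) (g y) ↔ (wheel 4).Adj x y := by
    rintro (x | x) (y | y) <;> (try fin_cases x) <;> (try fin_cases y) <;>
      simp [g, wheel, cycleGraph_adj', hab, hbc, hcd, hda, hva, hvb, hvc, hvd, hab.symm,
        hbc.symm, hcd.symm, hda.symm, hva.symm, hvb.symm, hvc.symm, hvd.symm, hac, hbd,
        G.adj_comm c a, G.adj_comm d b] <;> decide
  exact fun hW4 => hW4.false ⟨⟨g, hg⟩, hadj _ _⟩

theorem Embedding.pathGraph_three_adj {W : Type*} {H : SimpleGraph W} (f : pathGraph 3 ↪g H) :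
    H.Adj (f 0) (f 1) ∧ H.Adj (f 1) (f 2) ∧ ¬ H.Adj (f 0) (f 2) ∧ f 0 ≠ f 2 := by
  refine ⟨f.map_adj_iff.2 ?_, f.map_adj_iff.2 ?_, fun h => ?_, f.injective.ne (by decide)⟩
  all_goals simp_all [pathGraph_adj]

theorem inducedFree_pathGraph_three_induce_of_nonadj_common_neighbors {S : Set V} {u w : V}
    (hW4 : InducedFree (wheel 4) G) (huw_ne : u ≠ w) (huw : ¬ G.Adj u w)
    (hu : ∀ x ∈ S, G.Adj u x) (hw : ∀ x ∈ S, G.Adj w x) :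
    InducedFree (pathGraph 3) (G.induce S) := by
  refine ⟨fun f => ?_⟩
  obtain ⟨hab, hbc, hac, hac_ne⟩ := f.pathGraph_three_adj
  exact not_inducedFree_wheel_four (hu _ (f 0).2).symm (hu _ (f 2).2) (hw _ (f 2).2).symm
    (hw _ (f 0).2) hac huw (Subtype.coe_injective.ne hac_ne) huw_ne hab.symm
    (hu _ (f 1).2).symm hbc (hw _ (f 1).2).symm hW4

end SimpleGraph

theorem stmt_11_general {V : Type*} (G : SimpleGraph V) (A : Fin 5 → Set V)
    (hW4 : InducedFree (wheel 4) G)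
    (hAne : ∀ i : Fin 5, (A i).Nonempty)
    (hAdisj : ∀ i j : Fin 5, i ≠ j → Disjoint (A i) (A j))
    (hAcomp : ∀ i : Fin 5, ∀ a ∈ A i, ∀ b ∈ A (i + 1), G.Adj a b)
    (hAanti : ∀ i : Fin 5, ∀ a ∈ A i, ∀ b ∈ A (i + 2), ¬ G.Adj a b) :
    ∀ i : Fin 5, InducedFree (SimpleGraph.pathGraph 3) (G.induce (A i)) := by
  intro i
  obtain ⟨hpred, hpred₂, hne⟩ : i - 1 + 1 = i ∧ i - 1 + 2 = i + 1 ∧ i - 1 ≠ i + 1 :=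
    (by decide : ∀ j : Fin 5, j - 1 + 1 = j ∧ j - 1 + 2 = j + 1 ∧ j - 1 ≠ j + 1) i
  obtain ⟨u, hu⟩ := hAne (i - 1)
  obtain ⟨w, hw⟩ := hAne (i + 1)
  exact inducedFree_pathGraph_three_induce_of_nonadj_common_neighbors hW4
    ((hAdisj _ _ hne).ne_of_mem hu hw) (hAanti _ u hu w (by rwa [hpred₂]))
    (fun x hx => hAcomp _ u hu x (by rwa [hpred])) (fun x hx => (hAcomp i x hx w hw).symm)

theorem stmt_11 {V : Type*} [Fintype V] (G : SimpleGraph V) (A : Fin 5 → Set V)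
    (hconn : G.Connected)
    (hP5 : InducedFree (SimpleGraph.pathGraph 5) G)
    (hW4 : InducedFree (wheel 4) G)
    (hatom : IsGraphAtom G)
    (hAne : ∀ i : Fin 5, (A i).Nonempty)
    (hAdisj : ∀ i j : Fin 5, i ≠ j → Disjoint (A i) (A j))
    (hAcomp : ∀ i : Fin 5, ∀ a ∈ A i, ∀ b ∈ A (i + 1), G.Adj a b)
    (hAanti : ∀ i : Fin 5, ∀ a ∈ A i, ∀ b ∈ A (i + 2), ¬ G.Adj a b)
    (hAmax : ∀ v : V, v ∉ setA A → ¬ ∃ i : Fin 5,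
      (∀ a ∈ A (i - 1) ∪ A (i + 1), G.Adj v a) ∧
      (∀ a ∈ A (i - 2) ∪ A (i + 2), ¬ G.Adj v a)) :
    ∀ i : Fin 5, InducedFree (SimpleGraph.pathGraph 3) (G.induce (A i)) :=
  stmt_11_general G A hW4 hAne hAdisj hAcomp hAanti
end

section
/- In the C_5-setup, for each i the set X_i is complete to A_i. -/
open SimpleGraph

/-!
If `x ∈ X i` missed some `a ∈ A i`, pick `q ∈ A (i - 1)`, `p ∈ A (i + 1)` and a neighbour
`b ∈ A (i + 2)` of `x`; then `q – a – p – b – x` is an induced `P₅`.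
-/

section InducedSubgraphs

variable {V W : Type*} {G : SimpleGraph V}

lemma injective_of_adj_iff {H : SimpleGraph W}
    (hH : ∀ u v, (∀ w, H.Adj u w ↔ H.Adj v w) → u = v)
    {f : W → V} (hf : ∀ u v, G.Adj (f u) (f v) ↔ H.Adj u v) : Function.Injective f :=
  fun u v huv => hH u v fun w => by rw [← hf, ← hf, huv]

lemma not_inducedFree_of_adj_iff {H : SimpleGraph W}
    (hH : ∀ u v, (∀ w, H.Adj u w ↔ H.Adj v w) → u = v)
    {f : W → V} (hf : ∀ u v, G.Adj (f u) (f v) ↔ H.Adj u v) : ¬ InducedFree H G :=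
  fun hfree => hfree.false ⟨⟨f, injective_of_adj_iff hH hf⟩, hf _ _⟩

lemma pathGraph_five_eq_of_adj_iff_s12 (u v : Fin 5)
    (h : ∀ w, (pathGraph 5).Adj u w ↔ (pathGraph 5).Adj v w) : u = v := by
  revert u v; simp only [pathGraph_adj]; decide

lemma not_inducedFree_pathGraph_five {v₀ v₁ v₂ v₃ v₄ : V}
    (h₀₁ : G.Adj v₀ v₁) (h₁₂ : G.Adj v₁ v₂) (h₂₃ : G.Adj v₂ v₃) (h₃₄ : G.Adj v₃ v₄)
    (n₀₂ : ¬ G.Adj v₀ v₂) (n₀₃ : ¬ G.Adj v₀ v₃) (n₀₄ : ¬ G.Adj v₀ v₄)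
    (n₁₃ : ¬ G.Adj v₁ v₃) (n₁₄ : ¬ G.Adj v₁ v₄) (n₂₄ : ¬ G.Adj v₂ v₄) :
    ¬ InducedFree (pathGraph 5) G := by
  refine not_inducedFree_of_adj_iff pathGraph_five_eq_of_adj_iff_s12 (f := ![v₀, v₁, v₂, v₃, v₄]) ?_
  intro u v
  fin_cases u <;> fin_cases v <;>
    simp [pathGraph_adj, G.adj_comm v₁ v₀, G.adj_comm v₂ v₁, G.adj_comm v₃ v₂, G.adj_comm v₄ v₃,
      G.adj_comm v₂ v₀, G.adj_comm v₃ v₀, G.adj_comm v₄ v₀, G.adj_comm v₃ v₁, G.adj_comm v₄ v₁,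
      G.adj_comm v₄ v₂, *]

end InducedSubgraphs

theorem stmt_12_general {V : Type*} (G : SimpleGraph V) (A : Fin 5 → Set V)
    (hP5 : InducedFree (SimpleGraph.pathGraph 5) G)
    (hAne : ∀ i : Fin 5, (A i).Nonempty)
    (hAcomp : ∀ i : Fin 5, ∀ a ∈ A i, ∀ b ∈ A (i + 1), G.Adj a b)
    (hAanti : ∀ i : Fin 5, ∀ a ∈ A i, ∀ b ∈ A (i + 2), ¬ G.Adj a b) :
    ∀ i : Fin 5, ∀ x ∈ setX G A i, ∀ a ∈ A i, G.Adj x a := by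
  intro i x ⟨_, _, ⟨b, hb, hxb⟩, _, hx⟩ a ha
  by_contra hxa
  obtain ⟨q, hq⟩ := hAne (i - 1)
  obtain ⟨p, hp⟩ := hAne (i + 1)
  have hqa : G.Adj q a := hAcomp _ q hq a (by rwa [show i - 1 + 1 = i by omega])
  have hpb : G.Adj p b := hAcomp _ p hp b (by rwa [show i + 1 + 1 = i + 2 by omega])
  have hqp : ¬ G.Adj q p := hAanti _ q hq p (by rwa [show i - 1 + 2 = i + 1 by omega])
  have hqb : ¬ G.Adj q b := fun h =>
    hAanti _ b hb q (by rwa [show i + 2 + 2 = i - 1 by omega]) h.symm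
  exact not_inducedFree_pathGraph_five hqa (hAcomp i a ha p hp) hpb hxb.symm hqp hqb
    (fun h => hx q (.inr hq) h.symm) (hAanti i a ha b hb) (fun h => hxa h.symm)
    (fun h => hx p (.inl hp) h.symm) hP5

theorem stmt_12 {V : Type*} [Fintype V] (G : SimpleGraph V) (A : Fin 5 → Set V)
    (hconn : G.Connected)
    (hP5 : InducedFree (SimpleGraph.pathGraph 5) G)
    (hW4 : InducedFree (wheel 4) G)
    (hatom : IsGraphAtom G)
    (hAne : ∀ i : Fin 5, (A i).Nonempty)
    (hAdisj : ∀ i j : Fin 5, i ≠ j → Disjoint (A i) (A j))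
    (hAcomp : ∀ i : Fin 5, ∀ a ∈ A i, ∀ b ∈ A (i + 1), G.Adj a b)
    (hAanti : ∀ i : Fin 5, ∀ a ∈ A i, ∀ b ∈ A (i + 2), ¬ G.Adj a b)
    (hAmax : ∀ v : V, v ∉ setA A → ¬ ∃ i : Fin 5,
      (∀ a ∈ A (i - 1) ∪ A (i + 1), G.Adj v a) ∧
      (∀ a ∈ A (i - 2) ∪ A (i + 2), ¬ G.Adj v a)) :
    ∀ i : Fin 5, ∀ x ∈ setX G A i, ∀ a ∈ A i, G.Adj x a :=
  stmt_12_general G A hP5 hAne hAcomp hAanti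
end

section
/- In the C_5-setup, for each i the subgraph of G induced by X_i is P_3-free. -/
open SimpleGraph

/-!
Rotating the indices, take `i = 0`. A vertex `x ∈ X₀` is complete to `A₀`: a non-neighbour
`b ∈ A₀` gives an induced `P₅` `x - a₂ - a₁ - b - a₄`. It is also complete to `A₂` or to `A₃`:
non-neighbours `b₂ ∈ A₂`, `b₃ ∈ A₃` give an induced `P₅` `x - a₀ - a₁ - b₂ - b₃`. Given an induced
path `x - y - z` in `X₀`, two of the three vertices are complete to the same `A₂` or `A₃`, in which
the third has a neighbour `a`. For any `a₀ ∈ A₀`, `x - a - z - a₀` is an induced square, and `y`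
is adjacent to all four of its vertices: a 4-wheel.
-/

section InducedSubgraphs

variable {V : Type*} {G : SimpleGraph V}

lemma not_inducedFree_pathGraph_five_s14 {a b c d e : V}
    (hac : a ≠ c) (had : a ≠ d) (hae : a ≠ e) (hbd : b ≠ d) (hbe : b ≠ e) (hce : c ≠ e)
    (hab : G.Adj a b) (hbc : G.Adj b c) (hcd : G.Adj c d) (hde : G.Adj d e)
    (nac : ¬ G.Adj a c) (nad : ¬ G.Adj a d) (nae : ¬ G.Adj a e)
    (nbd : ¬ G.Adj b d) (nbe : ¬ G.Adj b e) (nce : ¬ G.Adj c e) :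
    ¬ InducedFree (pathGraph 5) G := by
  rw [InducedFree, not_isEmpty_iff]
  have := hab.ne; have := hbc.ne; have := hcd.ne; have := hde.ne
  refine ⟨⟨⟨![a, b, c, d, e], fun i j hij => ?_⟩, fun {i j} => ?_⟩⟩
  · fin_cases i <;> fin_cases j <;> simp_all [eq_comm]
  · change G.Adj (![a, b, c, d, e] i) (![a, b, c, d, e] j) ↔ _
    fin_cases i <;> fin_cases j <;>
      simp [pathGraph_adj, G.adj_comm, *]

lemma not_inducedFree_wheel_four {c₀ c₁ c₂ c₃ h : V} (h₀₂ : c₀ ≠ c₂) (h₁₃ : c₁ ≠ c₃)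
    (h₀₁ : G.Adj c₀ c₁) (h₁₂ : G.Adj c₁ c₂) (h₂₃ : G.Adj c₂ c₃) (h₃₀ : G.Adj c₃ c₀)
    (n₀₂ : ¬ G.Adj c₀ c₂) (n₁₃ : ¬ G.Adj c₁ c₃)
    (hc₀ : G.Adj h c₀) (hc₁ : G.Adj h c₁) (hc₂ : G.Adj h c₂) (hc₃ : G.Adj h c₃) :
    ¬ InducedFree (wheel 4) G := by
  rw [InducedFree, not_isEmpty_iff]
  have := h₀₁.ne; have := h₁₂.ne; have := h₂₃.ne; have := h₃₀.ne
  have := hc₀.ne; have := hc₁.ne; have := hc₂.ne; have := hc₃.ne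
  refine ⟨⟨⟨Sum.elim ![c₀, c₁, c₂, c₃] (fun _ => h), ?_⟩, fun {i j} => ?_⟩⟩
  · rintro (i | i) (j | j) hij <;> (try fin_cases i) <;> (try fin_cases j) <;>
      simp_all [eq_comm]
  · change G.Adj (Sum.elim ![c₀, c₁, c₂, c₃] (fun _ => h) i)
      (Sum.elim ![c₀, c₁, c₂, c₃] (fun _ => h) j) ↔ _
    rcases i with i | i <;> rcases j with j | j <;> (try fin_cases i) <;> (try fin_cases j) <;>
      simp [wheel, cycleGraph_adj', G.adj_comm c₁ c₀, G.adj_comm c₂ c₁, G.adj_comm c₃ c₂,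
        G.adj_comm c₀ c₃, G.adj_comm c₂ c₀, G.adj_comm c₃ c₁, G.adj_comm c₀ h, G.adj_comm c₁ h,
        G.adj_comm c₂ h, G.adj_comm c₃ h, *] <;> decide

lemma inducedFree_pathGraph_three {H : SimpleGraph V}
    (h : ∀ x y z, H.Adj x y → H.Adj y z → x ≠ z → H.Adj x z) :
    InducedFree (pathGraph 3) H := by
  refine ⟨fun φ => ?_⟩
  have hxy : H.Adj (φ 0) (φ 1) := φ.map_rel_iff.2 (by simp [pathGraph_adj])
  have hyz : H.Adj (φ 1) (φ 2) := φ.map_rel_iff.2 (by simp [pathGraph_adj])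
  have hxz : ¬ H.Adj (φ 0) (φ 2) := fun hxz => by
    simpa [pathGraph_adj] using φ.map_rel_iff.1 hxz
  exact hxz (h _ _ _ hxy hyz (φ.injective.ne (by decide)))

end InducedSubgraphs

structure IsC5Blowup {V : Type*} (G : SimpleGraph V) (A : Fin 5 → Set V) : Prop where
  nonempty : ∀ i, (A i).Nonempty
  disjoint : ∀ i j, i ≠ j → Disjoint (A i) (A j)
  adj : ∀ i, ∀ a ∈ A i, ∀ b ∈ A (i + 1), G.Adj a b
  not_adj : ∀ i, ∀ a ∈ A i, ∀ b ∈ A (i + 2), ¬ G.Adj a b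

namespace IsC5Blowup

variable {V : Type*} {G : SimpleGraph V} {A : Fin 5 → Set V}

lemma rotate (hA : IsC5Blowup G A) (i : Fin 5) : IsC5Blowup G (fun k => A (i + k)) where
  nonempty k := hA.nonempty _
  disjoint k l hkl := hA.disjoint _ _ (by simpa using hkl)
  adj k a ha b hb := hA.adj _ a ha b (by rwa [add_assoc])
  not_adj k a ha b hb := hA.not_adj _ a ha b (by rwa [add_assoc])

lemma ne_of_mem (hA : IsC5Blowup G A) {i j : Fin 5} (hij : i ≠ j) {a b : V}
    (ha : a ∈ A i) (hb : b ∈ A j) : a ≠ b :=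
  fun hab => Set.disjoint_left.1 (hA.disjoint i j hij) ha (hab ▸ hb)

end IsC5Blowup

section SetX

variable {V : Type*} {G : SimpleGraph V} {A : Fin 5 → Set V}

lemma ne_of_notMem_setA {x a : V} (hx : x ∉ setA A) {i : Fin 5} (ha : a ∈ A i) : x ≠ a :=
  fun hxa => hx (Set.mem_iUnion.2 ⟨i, hxa ▸ ha⟩)

lemma setX_rotate (i j : Fin 5) : setX G (fun k => A (i + k)) j = setX G A (i + j) := by
  have hA : setA (fun k => A (i + k)) = setA A := (Equiv.addLeft i).surjective.iUnion_comp A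
  ext x
  simp only [setX, hA, add_assoc, add_sub_assoc]

end SetX

section SetXZero

variable {V : Type*} {G : SimpleGraph V} {A : Fin 5 → Set V}

lemma adj_of_mem_setX_zero (hP5 : InducedFree (pathGraph 5) G) (hA : IsC5Blowup G A)
    {x : V} (hx : x ∈ setX G A 0) {b : V} (hb : b ∈ A 0) : G.Adj x b := by
  obtain ⟨hxA, -, ⟨a₂, ha₂, hxa₂⟩, -, hx₁₄⟩ := hx
  obtain ⟨a₁, ha₁⟩ := hA.nonempty 1
  obtain ⟨a₄, ha₄⟩ := hA.nonempty 4
  by_contra hxb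
  refine not_inducedFree_pathGraph_five_s14 (a := x) (b := a₂) (c := a₁) (d := b) (e := a₄)
    (ne_of_notMem_setA hxA ha₁) (ne_of_notMem_setA hxA hb) (ne_of_notMem_setA hxA ha₄)
    (hA.ne_of_mem (by decide) ha₂ hb) (hA.ne_of_mem (by decide) ha₂ ha₄)
    (hA.ne_of_mem (by decide) ha₁ ha₄)
    hxa₂ (hA.adj 1 a₁ ha₁ a₂ ha₂).symm (hA.adj 0 b hb a₁ ha₁).symm (hA.adj 4 a₄ ha₄ b hb).symm
    (hx₁₄ a₁ (Or.inl ha₁)) hxb (hx₁₄ a₄ (Or.inr ha₄))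
    (fun h => hA.not_adj 0 b hb a₂ ha₂ h.symm) (hA.not_adj 2 a₂ ha₂ a₄ ha₄)
    (fun h => hA.not_adj 4 a₄ ha₄ a₁ ha₁ h.symm) hP5

lemma complete_two_or_complete_three_of_mem_setX_zero (hP5 : InducedFree (pathGraph 5) G)
    (hA : IsC5Blowup G A) {x : V} (hx : x ∈ setX G A 0) :
    (∀ b ∈ A 2, G.Adj x b) ∨ (∀ b ∈ A 3, G.Adj x b) := by
  obtain ⟨hxA, ⟨a₀, ha₀, hxa₀⟩, -, -, hx₁₄⟩ := hx
  obtain ⟨a₁, ha₁⟩ := hA.nonempty 1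
  by_contra! ⟨⟨b₂, hb₂, hxb₂⟩, b₃, hb₃, hxb₃⟩
  refine not_inducedFree_pathGraph_five_s14 (a := x) (b := a₀) (c := a₁) (d := b₂) (e := b₃)
    (ne_of_notMem_setA hxA ha₁) (ne_of_notMem_setA hxA hb₂) (ne_of_notMem_setA hxA hb₃)
    (hA.ne_of_mem (by decide) ha₀ hb₂) (hA.ne_of_mem (by decide) ha₀ hb₃)
    (hA.ne_of_mem (by decide) ha₁ hb₃)
    hxa₀ (hA.adj 0 a₀ ha₀ a₁ ha₁) (hA.adj 1 a₁ ha₁ b₂ hb₂) (hA.adj 2 b₂ hb₂ b₃ hb₃)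
    (hx₁₄ a₁ (Or.inl ha₁)) hxb₂ hxb₃
    (hA.not_adj 0 a₀ ha₀ b₂ hb₂) (fun h => hA.not_adj 3 b₃ hb₃ a₀ ha₀ h.symm)
    (hA.not_adj 1 a₁ ha₁ b₃ hb₃) hP5

lemma exists_common_adj_of_mem_setX_zero (hP5 : InducedFree (pathGraph 5) G)
    (hA : IsC5Blowup G A) {x y z : V}
    (hx : x ∈ setX G A 0) (hy : y ∈ setX G A 0) (hz : z ∈ setX G A 0) :
    ∃ a ∈ A 2 ∪ A 3, G.Adj x a ∧ G.Adj y a ∧ G.Adj z a := by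
  have complete := fun {w} (hw : w ∈ setX G A 0) =>
    complete_two_or_complete_three_of_mem_setX_zero hP5 hA hw
  rcases complete hx with hx₂ | hx₃ <;> rcases complete hz with hz₂ | hz₃
  · obtain ⟨a, ha, hya⟩ := hy.2.2.1
    exact ⟨a, .inl ha, hx₂ a ha, hya, hz₂ a ha⟩
  · rcases complete hy with hy₂ | hy₃
    · obtain ⟨a, ha, hza⟩ := hz.2.2.1
      exact ⟨a, .inl ha, hx₂ a ha, hy₂ a ha, hza⟩
    · obtain ⟨a, ha, hxa⟩ := hx.2.2.2.1
      exact ⟨a, .inr ha, hxa, hy₃ a ha, hz₃ a ha⟩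
  · rcases complete hy with hy₂ | hy₃
    · obtain ⟨a, ha, hxa⟩ := hx.2.2.1
      exact ⟨a, .inl ha, hxa, hy₂ a ha, hz₂ a ha⟩
    · obtain ⟨a, ha, hza⟩ := hz.2.2.2.1
      exact ⟨a, .inr ha, hx₃ a ha, hy₃ a ha, hza⟩
  · obtain ⟨a, ha, hya⟩ := hy.2.2.2.1
    exact ⟨a, .inr ha, hx₃ a ha, hya, hz₃ a ha⟩

lemma adj_of_adj_of_adj_of_mem_setX_zero (hP5 : InducedFree (pathGraph 5) G)
    (hW4 : InducedFree (wheel 4) G) (hA : IsC5Blowup G A) {x y z : V}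
    (hx : x ∈ setX G A 0) (hy : y ∈ setX G A 0) (hz : z ∈ setX G A 0)
    (hxy : G.Adj x y) (hyz : G.Adj y z) (hxz : x ≠ z) : G.Adj x z := by
  by_contra nxz
  obtain ⟨a, ha, hxa, hya, hza⟩ := exists_common_adj_of_mem_setX_zero hP5 hA hx hy hz
  obtain ⟨a₀, ha₀⟩ := hA.nonempty 0
  have haa₀ : a ≠ a₀ ∧ ¬ G.Adj a a₀ := by
    rcases ha with ha | ha
    · exact ⟨hA.ne_of_mem (by decide) ha ha₀, fun h => hA.not_adj 0 a₀ ha₀ a ha h.symm⟩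
    · exact ⟨hA.ne_of_mem (by decide) ha ha₀, hA.not_adj 3 a ha a₀ ha₀⟩
  exact not_inducedFree_wheel_four hxz haa₀.1 hxa hza.symm (adj_of_mem_setX_zero hP5 hA hz ha₀)
    (adj_of_mem_setX_zero hP5 hA hx ha₀).symm nxz haa₀.2 hxy.symm hya hyz
    (adj_of_mem_setX_zero hP5 hA hy ha₀) hW4

lemma inducedFree_pathGraph_three_induce_setX_zero (hP5 : InducedFree (pathGraph 5) G)
    (hW4 : InducedFree (wheel 4) G) (hA : IsC5Blowup G A) :
    InducedFree (pathGraph 3) (G.induce (setX G A 0)) :=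
  inducedFree_pathGraph_three fun x y z hxy hyz hxz =>
    adj_of_adj_of_adj_of_mem_setX_zero hP5 hW4 hA x.2 y.2 z.2 hxy hyz
      (Subtype.coe_injective.ne hxz)

end SetXZero

theorem stmt_14_general {V : Type*} (G : SimpleGraph V) (A : Fin 5 → Set V)
    (hP5 : InducedFree (SimpleGraph.pathGraph 5) G)
    (hW4 : InducedFree (wheel 4) G)
    (hAne : ∀ i : Fin 5, (A i).Nonempty)
    (hAdisj : ∀ i j : Fin 5, i ≠ j → Disjoint (A i) (A j))
    (hAcomp : ∀ i : Fin 5, ∀ a ∈ A i, ∀ b ∈ A (i + 1), G.Adj a b)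
    (hAanti : ∀ i : Fin 5, ∀ a ∈ A i, ∀ b ∈ A (i + 2), ¬ G.Adj a b) :
    ∀ i : Fin 5, InducedFree (SimpleGraph.pathGraph 3) (G.induce (setX G A i)) := by
  intro i
  have hA : IsC5Blowup G A := ⟨hAne, hAdisj, hAcomp, hAanti⟩
  have := inducedFree_pathGraph_three_induce_setX_zero hP5 hW4 (hA.rotate i)
  rwa [setX_rotate, add_zero] at this

theorem stmt_14 {V : Type*} [Fintype V] (G : SimpleGraph V) (A : Fin 5 → Set V)
    (hconn : G.Connected)
    (hP5 : InducedFree (SimpleGraph.pathGraph 5) G)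
    (hW4 : InducedFree (wheel 4) G)
    (hatom : IsGraphAtom G)
    (hAne : ∀ i : Fin 5, (A i).Nonempty)
    (hAdisj : ∀ i j : Fin 5, i ≠ j → Disjoint (A i) (A j))
    (hAcomp : ∀ i : Fin 5, ∀ a ∈ A i, ∀ b ∈ A (i + 1), G.Adj a b)
    (hAanti : ∀ i : Fin 5, ∀ a ∈ A i, ∀ b ∈ A (i + 2), ¬ G.Adj a b)
    (hAmax : ∀ v : V, v ∉ setA A → ¬ ∃ i : Fin 5,
      (∀ a ∈ A (i - 1) ∪ A (i + 1), G.Adj v a) ∧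
      (∀ a ∈ A (i - 2) ∪ A (i + 2), ¬ G.Adj v a)) :
    ∀ i : Fin 5, InducedFree (SimpleGraph.pathGraph 3) (G.induce (setX G A i)) :=
  stmt_14_general G A hP5 hW4 hAne hAdisj hAcomp hAanti
end

section
/- In the C_5-setup, for each i the set X_i is complete to X_{i+1} ∪ X_{i−1}. -/
open SimpleGraph

/-!
If `x ∈ X i` and `y ∈ X (i + 1)` were nonadjacent, take neighbours `a ∈ A i`, `c ∈ A (i + 2)`
of `x` and `b ∈ A (i - 1)` of `y`: then `y - b - a - x - c` is an induced `P₅`.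
The case `y ∈ X (i - 1)` is the same one with `x` and `y` exchanged.
-/

theorem InducedFree.false_of_induced_path_five {V : Type*} {G : SimpleGraph V}
    (hP5 : InducedFree (pathGraph 5) G) {v₀ v₁ v₂ v₃ v₄ : V}
    (h01 : G.Adj v₀ v₁) (h12 : G.Adj v₁ v₂) (h23 : G.Adj v₂ v₃) (h34 : G.Adj v₃ v₄)
    (h02 : ¬ G.Adj v₀ v₂) (h03 : ¬ G.Adj v₀ v₃) (h04 : ¬ G.Adj v₀ v₄)
    (h13 : ¬ G.Adj v₁ v₃) (h14 : ¬ G.Adj v₁ v₄) (h24 : ¬ G.Adj v₂ v₄) : False := by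
  have hadj : ∀ a b : Fin 5,
      G.Adj (![v₀, v₁, v₂, v₃, v₄] a) (![v₀, v₁, v₂, v₃, v₄] b) ↔ (pathGraph 5).Adj a b := by
    intro a b
    fin_cases a <;> fin_cases b <;>
      simp [pathGraph_adj, h01, h12, h23, h34, h02, h03, h04, h13, h14, h24, h01.symm, h12.symm,
        h23.symm, h34.symm, G.adj_comm v₂ v₀, G.adj_comm v₃ v₀, G.adj_comm v₄ v₀,
        G.adj_comm v₃ v₁, G.adj_comm v₄ v₁, G.adj_comm v₄ v₂]
  -- Distinct vertices of `P₅` have distinct neighbourhoods, so the map is injective.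
  have eq_of_neighbors : ∀ a b : Fin 5,
      (∀ c, (pathGraph 5).Adj c a ↔ (pathGraph 5).Adj c b) → a = b := by
    simp only [pathGraph_adj]
    decide
  refine hP5.false ⟨⟨![v₀, v₁, v₂, v₃, v₄], fun a b hab => eq_of_neighbors a b fun c => ?_⟩,
    hadj _ _⟩
  rw [← hadj, ← hadj, hab]

theorem adj_of_mem_setX_of_mem_setX_add_one {V : Type*} {G : SimpleGraph V} {A : Fin 5 → Set V}
    (hP5 : InducedFree (pathGraph 5) G)
    (hAcomp : ∀ i : Fin 5, ∀ a ∈ A i, ∀ b ∈ A (i + 1), G.Adj a b)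
    (hAanti : ∀ i : Fin 5, ∀ a ∈ A i, ∀ b ∈ A (i + 2), ¬ G.Adj a b)
    {i : Fin 5} {x y : V} (hx : x ∈ setX G A i) (hy : y ∈ setX G A (i + 1)) : G.Adj x y := by
  obtain ⟨-, ⟨a, ha, hxa⟩, ⟨c, hc, hxc⟩, -, hx_anti⟩ := hx
  obtain ⟨-, -, -, ⟨b, hb, hyb⟩, hy_anti⟩ := hy
  have fin_five_arith : ∀ j : Fin 5, j + 1 - 2 = j - 1 ∧ j + 1 + 1 = j + 2 ∧ j + 1 - 1 = j ∧
      j + 2 + 2 = j - 1 := by decide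
  obtain ⟨e₁, e₂, e₃, e₄⟩ := fin_five_arith i
  rw [e₁] at hb
  rw [e₂, e₃] at hy_anti
  by_contra hxy
  exact hP5.false_of_induced_path_five hyb (hAcomp _ b hb a (by rwa [sub_add_cancel]))
    hxa.symm hxc (hy_anti a (.inr ha)) (fun h => hxy h.symm) (hy_anti c (.inl hc))
    (fun h => hx_anti b (.inr hb) h.symm) (fun h => hAanti _ c hc b (by rwa [e₄]) h.symm)
    (hAanti i a ha c hc)

theorem stmt_15_general {V : Type*} (G : SimpleGraph V) (A : Fin 5 → Set V)
    (hP5 : InducedFree (SimpleGraph.pathGraph 5) G)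
    (hAcomp : ∀ i : Fin 5, ∀ a ∈ A i, ∀ b ∈ A (i + 1), G.Adj a b)
    (hAanti : ∀ i : Fin 5, ∀ a ∈ A i, ∀ b ∈ A (i + 2), ¬ G.Adj a b) :
    ∀ i : Fin 5, ∀ x ∈ setX G A i,
      ∀ y ∈ setX G A (i + 1) ∪ setX G A (i - 1), G.Adj x y := by
  rintro i x hx y (hy | hy)
  · exact adj_of_mem_setX_of_mem_setX_add_one hP5 hAcomp hAanti hx hy
  · have hx' : x ∈ setX G A (i - 1 + 1) := by rwa [sub_add_cancel]
    exact (adj_of_mem_setX_of_mem_setX_add_one hP5 hAcomp hAanti hy hx').symm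

theorem stmt_15 {V : Type*} [Fintype V] (G : SimpleGraph V) (A : Fin 5 → Set V)
    (hconn : G.Connected)
    (hP5 : InducedFree (SimpleGraph.pathGraph 5) G)
    (hW4 : InducedFree (wheel 4) G)
    (hatom : IsGraphAtom G)
    (hAne : ∀ i : Fin 5, (A i).Nonempty)
    (hAdisj : ∀ i j : Fin 5, i ≠ j → Disjoint (A i) (A j))
    (hAcomp : ∀ i : Fin 5, ∀ a ∈ A i, ∀ b ∈ A (i + 1), G.Adj a b)
    (hAanti : ∀ i : Fin 5, ∀ a ∈ A i, ∀ b ∈ A (i + 2), ¬ G.Adj a b)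
    (hAmax : ∀ v : V, v ∉ setA A → ¬ ∃ i : Fin 5,
      (∀ a ∈ A (i - 1) ∪ A (i + 1), G.Adj v a) ∧
      (∀ a ∈ A (i - 2) ∪ A (i + 2), ¬ G.Adj v a)) :
    ∀ i : Fin 5, ∀ x ∈ setX G A i,
      ∀ y ∈ setX G A (i + 1) ∪ setX G A (i - 1), G.Adj x y :=
  stmt_15_general G A hP5 hAcomp hAanti
end

section
/- In the C_5-setup, for each i, every vertex of Y_i is complete to A_{i−1} or complete to A_{i+1}. -/
open SimpleGraph

/-! If `y ∈ Y i` had non-neighbours `b ∈ A (i-1)` and `c ∈ A (i+1)`, then for any `a ∈ A i`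
and any neighbour `d ∈ A (i+2)` of `y`, the path `b - a - c - d - y` would be an induced `P₅`. -/

namespace SimpleGraph

variable {V : Type*} {G : SimpleGraph V}

theorem not_inducedFree_pathGraph_five {v : Fin 5 → V}
    (h01 : G.Adj (v 0) (v 1)) (h12 : G.Adj (v 1) (v 2)) (h23 : G.Adj (v 2) (v 3))
    (h34 : G.Adj (v 3) (v 4))
    (h02 : ¬ G.Adj (v 0) (v 2)) (h03 : ¬ G.Adj (v 0) (v 3)) (h04 : ¬ G.Adj (v 0) (v 4))
    (h13 : ¬ G.Adj (v 1) (v 3)) (h14 : ¬ G.Adj (v 1) (v 4)) (h24 : ¬ G.Adj (v 2) (v 4)) :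
    ¬ InducedFree (pathGraph 5) G := by
  have hinj : Function.Injective v := by
    intro j k h
    fin_cases j <;> fin_cases k <;> first | rfl | simp_all [G.adj_comm]
  have hadj : ∀ j k, G.Adj (v j) (v k) ↔ (pathGraph 5).Adj j k := by
    intro j k
    fin_cases j <;> fin_cases k <;> simp [pathGraph_adj, *] <;> rw [G.adj_comm] <;> assumption
  exact fun hfree => hfree.false ⟨⟨v, hinj⟩, hadj _ _⟩

theorem not_inducedFree_pathGraph_five_of_C5_blowup (A : Fin 5 → Set V)
    (hAcomp : ∀ i : Fin 5, ∀ a ∈ A i, ∀ b ∈ A (i + 1), G.Adj a b)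
    (hAanti : ∀ i : Fin 5, ∀ a ∈ A i, ∀ b ∈ A (i + 2), ¬ G.Adj a b)
    {i : Fin 5} {b a c d y : V} (hb : b ∈ A (i - 1)) (ha : a ∈ A i) (hc : c ∈ A (i + 1))
    (hd : d ∈ A (i + 2)) (hyb : ¬ G.Adj y b) (hya : ¬ G.Adj y a) (hyc : ¬ G.Adj y c)
    (hyd : G.Adj y d) :
    ¬ InducedFree (pathGraph 5) G := by
  have e1 : i - 1 + 1 = i := sub_add_cancel i 1
  have e2 : i + 1 + 1 = i + 2 := by rw [add_assoc]; rfl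
  have e3 : i - 1 + 2 = i + 1 := by rw [sub_add_eq_add_sub, add_sub_assoc]; rfl
  have e4 : i + 2 + 2 = i - 1 := by rw [add_assoc, sub_eq_add_neg]; rfl
  exact not_inducedFree_pathGraph_five (v := ![b, a, c, d, y])
    (hAcomp _ b hb a (by rwa [e1])) (hAcomp i a ha c hc) (hAcomp _ c hc d (by rwa [e2]))
    hyd.symm (hAanti _ b hb c (by rwa [e3])) (fun h => hAanti _ d hd b (by rwa [e4]) h.symm)
    (fun h => hyb h.symm) (hAanti i a ha d hd) (fun h => hya h.symm) (fun h => hyc h.symm)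

end SimpleGraph

theorem stmt_16_general {V : Type*} (G : SimpleGraph V) (A : Fin 5 → Set V)
    (hP5 : InducedFree (SimpleGraph.pathGraph 5) G)
    (hAne : ∀ i : Fin 5, (A i).Nonempty)
    (hAcomp : ∀ i : Fin 5, ∀ a ∈ A i, ∀ b ∈ A (i + 1), G.Adj a b)
    (hAanti : ∀ i : Fin 5, ∀ a ∈ A i, ∀ b ∈ A (i + 2), ¬ G.Adj a b) :
    ∀ i : Fin 5, ∀ y ∈ setY G A i,
      (∀ a ∈ A (i - 1), G.Adj y a) ∨ (∀ a ∈ A (i + 1), G.Adj y a) := by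
  intro i y ⟨_, hyA, hyAi⟩
  by_contra! ⟨⟨b, hb, hyb⟩, ⟨c, hc, hyc⟩⟩
  obtain ⟨a, ha⟩ := hAne i
  obtain ⟨d, hd, hyd⟩ := hyA (i + 2) (by simp)
  exact not_inducedFree_pathGraph_five_of_C5_blowup A hAcomp hAanti hb ha hc hd hyb
    (hyAi a ha) hyc hyd hP5

theorem stmt_16 {V : Type*} [Fintype V] (G : SimpleGraph V) (A : Fin 5 → Set V)
    (hconn : G.Connected)
    (hP5 : InducedFree (SimpleGraph.pathGraph 5) G)
    (hW4 : InducedFree (wheel 4) G)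
    (hatom : IsGraphAtom G)
    (hAne : ∀ i : Fin 5, (A i).Nonempty)
    (hAdisj : ∀ i j : Fin 5, i ≠ j → Disjoint (A i) (A j))
    (hAcomp : ∀ i : Fin 5, ∀ a ∈ A i, ∀ b ∈ A (i + 1), G.Adj a b)
    (hAanti : ∀ i : Fin 5, ∀ a ∈ A i, ∀ b ∈ A (i + 2), ¬ G.Adj a b)
    (hAmax : ∀ v : V, v ∉ setA A → ¬ ∃ i : Fin 5,
      (∀ a ∈ A (i - 1) ∪ A (i + 1), G.Adj v a) ∧
      (∀ a ∈ A (i - 2) ∪ A (i + 2), ¬ G.Adj v a)) :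
    ∀ i : Fin 5, ∀ y ∈ setY G A i,
      (∀ a ∈ A (i - 1), G.Adj y a) ∨ (∀ a ∈ A (i + 1), G.Adj y a) :=
  stmt_16_general G A hP5 hAne hAcomp hAanti
end

section
/- In the C_5-setup, if Z = ∅ then the subgraph of G induced by T is P_3-free. -/
open SimpleGraph

/-!
Suppose `t₁ - t₂ - t₃` is an induced `P₃` in `T`. Since `Z = ∅`, every vertex `x ∉ A ∪ T` with a
neighbour in `A` has, going around the cycle, a neighbour `p ∈ A_k` and a non-neighbour
`b ∈ A_{k+1}`, so `p b` is an edge. Hence if `x` is adjacent to `t ∈ T` but not to a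
`T`-neighbour `t'` of `t`, then `t' - t - x - p - b` is an induced `P₅`. So the neighbours of
`t₁` outside `T` are adjacent to `t₂` and `t₃`, and 4-wheel-freeness makes them a clique `Q`
(two non-adjacent ones would form a `C₄` with `t₁, t₃` and hub `t₂`). The same propagation shows
that `Q` separates `t₁` from `A`, so `Q` is a clique cutset.
-/

open Fin.NatCast in
theorem Fin.exists_and_not_add_one {n : ℕ} [NeZero n] {P : Fin n → Prop} {i j : Fin n}
    (hj : P j) (hi : ¬ P i) : ∃ k, P k ∧ ¬ P (k + 1) := by
  by_contra! h
  have hP : ∀ m : ℕ, P (j + (m : Fin n)) := by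
    intro m
    induction m with
    | zero => simpa using hj
    | succ m ih => simpa [Nat.cast_succ, ← add_assoc] using h _ ih
  exact hi (by simpa using hP (i - j).val)

section Wheel

variable {k : ℕ}

@[simp]
theorem wheel_adj_inl_inl {a b : Fin k} :
    (wheel k).Adj (.inl a) (.inl b) ↔ (cycleGraph k).Adj a b := by
  simp [wheel, fromRel_adj, (cycleGraph k).adj_comm b a, and_iff_right_of_imp Adj.ne]

@[simp]
theorem wheel_adj_inl_inr (a : Fin k) (u : Unit) : (wheel k).Adj (.inl a) (.inr u) := by
  simp [wheel]

@[simp]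
theorem wheel_adj_inr_inl (u : Unit) (a : Fin k) : (wheel k).Adj (.inr u) (.inl a) := by
  simp [wheel]

@[simp]
theorem not_wheel_adj_inr_inr (u v : Unit) : ¬ (wheel k).Adj (.inr u) (.inr v) := by
  simp [wheel]

end Wheel

namespace InducedFree

variable {W V : Type*} {H : SimpleGraph W} {G : SimpleGraph V}

theorem false_of_injective (hH : InducedFree H G) (f : W → V) (hf : Function.Injective f)
    (hadj : ∀ a b, G.Adj (f a) (f b) ↔ H.Adj a b) : False :=
  hH.false ⟨⟨f, hf⟩, hadj _ _⟩

theorem not_induced_path5 (hP5 : InducedFree (pathGraph 5) G) {v₀ v₁ v₂ v₃ v₄ : V}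
    (h₀₁ : G.Adj v₀ v₁) (h₁₂ : G.Adj v₁ v₂) (h₂₃ : G.Adj v₂ v₃) (h₃₄ : G.Adj v₃ v₄)
    (h₀₂ : ¬ G.Adj v₀ v₂) (h₀₃ : ¬ G.Adj v₀ v₃) (h₀₄ : ¬ G.Adj v₀ v₄)
    (h₁₃ : ¬ G.Adj v₁ v₃) (h₁₄ : ¬ G.Adj v₁ v₄) (h₂₄ : ¬ G.Adj v₂ v₄)
    (d₀₂ : v₀ ≠ v₂) (d₀₃ : v₀ ≠ v₃) (d₀₄ : v₀ ≠ v₄) (d₁₃ : v₁ ≠ v₃) (d₁₄ : v₁ ≠ v₄)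
    (d₂₄ : v₂ ≠ v₄) : False := by
  refine hP5.false_of_injective ![v₀, v₁, v₂, v₃, v₄] ?_ ?_
  · have := h₀₁.ne; have := h₁₂.ne; have := h₂₃.ne; have := h₃₄.ne
    intro a b hab
    fin_cases a <;> fin_cases b <;> simp_all [eq_comm]
  · intro a b
    fin_cases a <;> fin_cases b <;> simp_all [pathGraph_adj, G.adj_comm]

theorem not_induced_wheel4 (hW4 : InducedFree (wheel 4) G) {c₀ c₁ c₂ c₃ h : V}
    (h₀₁ : G.Adj c₀ c₁) (h₁₂ : G.Adj c₁ c₂) (h₂₃ : G.Adj c₂ c₃) (h₃₀ : G.Adj c₃ c₀)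
    (h₀₂ : ¬ G.Adj c₀ c₂) (h₁₃ : ¬ G.Adj c₁ c₃)
    (hh₀ : G.Adj h c₀) (hh₁ : G.Adj h c₁) (hh₂ : G.Adj h c₂) (hh₃ : G.Adj h c₃)
    (d₀₂ : c₀ ≠ c₂) (d₁₃ : c₁ ≠ c₃) : False := by
  refine hW4.false_of_injective (Sum.elim ![c₀, c₁, c₂, c₃] fun _ => h) ?_ ?_
  · have := h₀₁.ne; have := h₁₂.ne; have := h₂₃.ne; have := h₃₀.ne
    have := hh₀.ne; have := hh₁.ne; have := hh₂.ne; have := hh₃.ne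
    rintro (a | u) (b | v) hab
    · fin_cases a <;> fin_cases b <;> simp_all [eq_comm]
    · fin_cases a <;> simp_all [eq_comm]
    · fin_cases b <;> simp_all [eq_comm]
    · rfl
  · rintro (a | u) (b | v)
    · fin_cases a <;> fin_cases b <;> simp_all [cycleGraph_adj, G.adj_comm] <;> decide
    · fin_cases a <;> simp_all [G.adj_comm]
    · fin_cases b <;> simp_all
    · simp

theorem isClique_of_forall_adj_path3 (hW4 : InducedFree (wheel 4) G) {a b c : V}
    (hab : G.Adj a b) (hbc : G.Adj b c) (hac : ¬ G.Adj a c) (hne : a ≠ c) {Q : Set V}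
    (hQ : ∀ x ∈ Q, G.Adj x a ∧ G.Adj x b ∧ G.Adj x c) : G.IsClique Q := by
  intro x hx y hy hxy
  by_contra hnxy
  obtain ⟨hxa, hxb, hxc⟩ := hQ x hx
  obtain ⟨hya, hyb, hyc⟩ := hQ y hy
  exact hW4.not_induced_wheel4 hxa hya.symm hyc hxc.symm hnxy hac
    hxb.symm hab.symm hyb.symm hbc hxy hne

end InducedFree

namespace SimpleGraph

variable {V : Type*} {G : SimpleGraph V}

theorem not_reachable_induce_compl {Q S : Set V}
    (hS : ∀ v ∈ S, ∀ w, G.Adj v w → w ∈ S ∨ w ∈ Q) {u w : ↥Qᶜ} (hu : ↑u ∈ S) (hw : ↑w ∉ S) :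
    ¬ (G.induce Qᶜ).Reachable u w := by
  rintro ⟨p⟩
  induction p with
  | nil => exact hw hu
  | @cons a b c hab _ ih => exact ih ((hS a hu b hab).resolve_right b.2) hw

theorem hasCliqueCutset_of_separates [Finite V] (hG : G.Connected) {Q S : Set V}
    (hQ : G.IsClique Q) (hS : ∀ v ∈ S, ∀ w, G.Adj v w → w ∈ S ∨ w ∈ Q) {u w : V}
    (hu : u ∈ S \ Q) (hw : w ∉ S ∪ Q) : HasCliqueCutset G := by
  refine ⟨Q, hQ, ?_⟩
  have : Subsingleton G.ConnectedComponent := hG.preconnected.subsingleton_connectedComponent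
  have : Nontrivial (G.induce Qᶜ).ConnectedComponent :=
    ⟨_, _, mt ConnectedComponent.exact <| not_reachable_induce_compl (u := ⟨u, hu.2⟩)
      (w := ⟨w, fun h => hw (.inr h)⟩) hS hu.1 fun h => hw (.inl h)⟩
  exact (Finite.card_le_one_iff_subsingleton.mpr ‹_›).trans_lt Finite.one_lt_card

end SimpleGraph

section C5Setup

variable {V : Type*} {G : SimpleGraph V} {A : Fin 5 → Set V}

theorem exists_adj_adj_not_adj_of_not_mem_setT (hAne : ∀ i, (A i).Nonempty)
    (hAcomp : ∀ i : Fin 5, ∀ a ∈ A i, ∀ b ∈ A (i + 1), G.Adj a b) (hZ : setZ G A = ∅)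
    {x : V} (hxA : x ∉ setA A) (hxT : x ∉ setT G A) :
    ∃ p ∈ setA A, ∃ b ∈ setA A, G.Adj x p ∧ G.Adj p b ∧ ¬ G.Adj x b := by
  obtain ⟨a, ha, hxa⟩ : ∃ a ∈ setA A, G.Adj x a := by
    by_contra! h
    exact hxT ⟨hxA, h⟩
  obtain ⟨j, haj⟩ := Set.mem_iUnion.mp ha
  obtain ⟨i, hi⟩ : ∃ i, ¬ ∃ c ∈ A i, G.Adj x c := by
    by_contra! h
    exact Set.eq_empty_iff_forall_notMem.mp hZ x ⟨hxA, h⟩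
  obtain ⟨k, ⟨p, hp, hxp⟩, hk⟩ :=
    Fin.exists_and_not_add_one (P := fun k => ∃ c ∈ A k, G.Adj x c) ⟨a, haj, hxa⟩ hi
  obtain ⟨b, hb⟩ := hAne (k + 1)
  exact ⟨p, Set.mem_iUnion_of_mem k hp, b, Set.mem_iUnion_of_mem _ hb, hxp,
    hAcomp k p hp b hb, fun hxb => hk ⟨b, hb, hxb⟩⟩

theorem adj_of_adj_of_adj_mem_setT (hP5 : InducedFree (pathGraph 5) G)
    (hAne : ∀ i, (A i).Nonempty)
    (hAcomp : ∀ i : Fin 5, ∀ a ∈ A i, ∀ b ∈ A (i + 1), G.Adj a b) (hZ : setZ G A = ∅)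
    {x t t' : V} (hxT : x ∉ setT G A) (ht : t ∈ setT G A) (ht' : t' ∈ setT G A)
    (hxt : G.Adj x t) (htt' : G.Adj t t') : G.Adj x t' := by
  by_contra hxt'
  have hxA : x ∉ setA A := fun hx => ht.2 x hx hxt.symm
  obtain ⟨p, hp, b, hb, hxp, hpb, hxb⟩ :=
    exists_adj_adj_not_adj_of_not_mem_setT hAne hAcomp hZ hxA hxT
  exact hP5.not_induced_path5 htt'.symm hxt.symm hxp hpb (hxt' ·.symm) (ht'.2 p hp)
    (ht'.2 b hb) (ht.2 p hp) (ht.2 b hb) hxb (ht'.ne_of_notMem hxT)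
    (hp.ne_of_notMem ht'.1).symm (hb.ne_of_notMem ht'.1).symm (hp.ne_of_notMem ht.1).symm
    (hb.ne_of_notMem ht.1).symm (hb.ne_of_notMem hxA).symm

theorem hasCliqueCutset_of_induced_path3_setT [Finite V] (hconn : G.Connected)
    (hP5 : InducedFree (pathGraph 5) G) (hW4 : InducedFree (wheel 4) G)
    (hAne : ∀ i, (A i).Nonempty)
    (hAcomp : ∀ i : Fin 5, ∀ a ∈ A i, ∀ b ∈ A (i + 1), G.Adj a b) (hZ : setZ G A = ∅)
    {t₁ t₂ t₃ : V} (ht₁ : t₁ ∈ setT G A) (ht₂ : t₂ ∈ setT G A) (ht₃ : t₃ ∈ setT G A)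
    (h₁₂ : G.Adj t₁ t₂) (h₂₃ : G.Adj t₂ t₃) (h₁₃ : ¬ G.Adj t₁ t₃) (hne : t₁ ≠ t₃) :
    HasCliqueCutset G := by
  have hprop := @adj_of_adj_of_adj_mem_setT _ _ _ hP5 hAne hAcomp hZ
  set T := setT G A
  let Q := {x | x ∉ T ∧ G.Adj x t₁}
  let S := {v | v ∈ T ∧ ∀ x ∉ T, G.Adj x v → G.Adj x t₁}
  have hQ : G.IsClique Q := hW4.isClique_of_forall_adj_path3 h₁₂ h₂₃ h₁₃ hne fun x hx =>
    have hx₂ := hprop hx.1 ht₁ ht₂ hx.2 h₁₂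
    ⟨hx.2, hx₂, hprop hx.1 ht₂ ht₃ hx₂ h₂₃⟩
  have hS : ∀ v ∈ S, ∀ w, G.Adj v w → w ∈ S ∨ w ∈ Q := by
    intro v hv w hvw
    by_cases hw : w ∈ T
    · exact .inl ⟨hw, fun x hx hxw => hv.2 x hx (hprop hx hw hv.1 hxw hvw.symm)⟩
    · exact .inr ⟨hw, hv.2 w hw hvw.symm⟩
  obtain ⟨a, ha⟩ := hAne 0
  have haA : a ∈ setA A := Set.mem_iUnion_of_mem 0 ha
  exact hasCliqueCutset_of_separates hconn hQ hS (u := t₁) ⟨⟨ht₁, fun _ _ => id⟩, fun h => h.1 ht₁⟩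
    (w := a) (by rintro (h | h) <;> [exact h.1.1 haA; exact ht₁.2 a haA h.2.symm])

end C5Setup

theorem stmt_17_general {V : Type*} [Fintype V] (G : SimpleGraph V) (A : Fin 5 → Set V)
    (hconn : G.Connected)
    (hP5 : InducedFree (SimpleGraph.pathGraph 5) G)
    (hW4 : InducedFree (wheel 4) G)
    (hatom : IsGraphAtom G)
    (hAne : ∀ i : Fin 5, (A i).Nonempty)
    (hAcomp : ∀ i : Fin 5, ∀ a ∈ A i, ∀ b ∈ A (i + 1), G.Adj a b)
    (hZ : setZ G A = ∅) :
    InducedFree (SimpleGraph.pathGraph 3) (G.induce (setT G A)) := by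
  refine ⟨fun f => hatom ?_⟩
  have hadj (i j : Fin 3) : G.Adj (f i) (f j) ↔ (pathGraph 3).Adj i j := f.map_adj_iff
  exact hasCliqueCutset_of_induced_path3_setT hconn hP5 hW4 hAne hAcomp hZ (f 0).2 (f 1).2
    (f 2).2 ((hadj 0 1).2 (by simp [pathGraph_adj])) ((hadj 1 2).2 (by simp [pathGraph_adj]))
    (mt (hadj 0 2).1 (by simp [pathGraph_adj]))
    fun h => absurd (f.injective (Subtype.ext h)) (by decide)

theorem stmt_17 {V : Type*} [Fintype V] (G : SimpleGraph V) (A : Fin 5 → Set V)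
    (hconn : G.Connected)
    (hP5 : InducedFree (SimpleGraph.pathGraph 5) G)
    (hW4 : InducedFree (wheel 4) G)
    (hatom : IsGraphAtom G)
    (hAne : ∀ i : Fin 5, (A i).Nonempty)
    (hAdisj : ∀ i j : Fin 5, i ≠ j → Disjoint (A i) (A j))
    (hAcomp : ∀ i : Fin 5, ∀ a ∈ A i, ∀ b ∈ A (i + 1), G.Adj a b)
    (hAanti : ∀ i : Fin 5, ∀ a ∈ A i, ∀ b ∈ A (i + 2), ¬ G.Adj a b)
    (hAmax : ∀ v : V, v ∉ setA A → ¬ ∃ i : Fin 5,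
      (∀ a ∈ A (i - 1) ∪ A (i + 1), G.Adj v a) ∧
      (∀ a ∈ A (i - 2) ∪ A (i + 2), ¬ G.Adj v a))
    (hZ : setZ G A = ∅) :
    InducedFree (SimpleGraph.pathGraph 3) (G.induce (setT G A)) :=
  stmt_17_general G A hconn hP5 hW4 hatom hAne hAcomp hZ
end
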